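/- Let d ∈ ℕ, T, L, P > 0, X_0 ⊂ ℝ^d nonempty compact, and F : ℝ^d → KC(ℝ^d) an L-Lipschitz map with sup_{x∈ℝ^d} sup_{f∈F(x)} ‖f‖_∞ ≤ P. Let n ∈ ℕ, h ∈ ℝ^n with all entries h_1,…,h_n > 0 and Σ_{j=1}^n h_j = T, ρ ∈ ℝ^{n+1} with all entries ρ_0,…,ρ_n > 0, and set t_k = Σ_{j=1}^k h_j. Then for every k ∈ [0,n], the Hausdorff distance between the exact and discrete reachable sets satisfies dist_H(R^F(t_k), R^F_{h,ρ}(k)) ≤ e^{LT} ρ_0/2 + Σ_{j=1}^k e^{L(T−t_j)} (e^{L h_j} − 1) (P h_j + ρ_j/2 + ρ_j/(2L h_j)). -/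

import Mathlib

open Real MeasureTheory Set Pointwise

noncomputable section

/-- The grid `ρ ℤ^d`. -/
def grid (d : ℕ) (ρ : ℝ) : Set (Fin d → ℝ) :=
  {x | ∀ i, ∃ m : ℤ, x i = ρ * m}

/-- The projector `π_ρ(A) = (A + B_{ρ/2}(0)) ∩ ρℤ^d` (closed ball in the max norm). -/
def proj (d : ℕ) (ρ : ℝ) (A : Set (Fin d → ℝ)) : Set (Fin d → ℝ) :=
  (A + Metric.closedBall (0 : Fin d → ℝ) (ρ / 2)) ∩ grid d ρ

/-- `x : ℝ → ℝ^d` is a solution of `ẋ ∈ F(x)`, `x(0) ∈ X₀` on `[0,T]`: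
an absolutely continuous (i.e. `W^{1,1}`) function, written as the integral of an
integrable a.e. derivative `x'` with `x'(t) ∈ F(x(t))` for a.e. `t ∈ (0,T)`. -/
def IsSolution (d : ℕ) (F : (Fin d → ℝ) → Set (Fin d → ℝ)) (X0 : Set (Fin d → ℝ))
    (T : ℝ) (x : ℝ → Fin d → ℝ) : Prop :=
  x 0 ∈ X0 ∧ ∃ x' : ℝ → Fin d → ℝ,
    IntegrableOn x' (Icc 0 T) volume ∧
    (∀ t ∈ Icc 0 T, x t = x 0 + ∫ s in Ioc (0 : ℝ) t, x' s) ∧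
    (∀ᵐ t ∂(volume.restrict (Ioo (0 : ℝ) T)), x' t ∈ F (x t))

/-- The reachable set `R^F(t)` of the inclusion at time `t`. -/
def reach (d : ℕ) (F : (Fin d → ℝ) → Set (Fin d → ℝ)) (X0 : Set (Fin d → ℝ))
    (T t : ℝ) : Set (Fin d → ℝ) :=
  {y | ∃ x : ℝ → Fin d → ℝ, IsSolution d F X0 T x ∧ x t = y}

/-- The discrete reachable sets of the fully discrete Euler scheme:
`R(0) = π_{ρ₀}(X₀)`, `R(k+1) = ⋃_{y ∈ R(k)} π_{ρ_{k+1}}(y + h_{k+1} F(y))`. -/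
def discReach (d : ℕ) (F : (Fin d → ℝ) → Set (Fin d → ℝ)) (X0 : Set (Fin d → ℝ))
    (h ρ : ℕ → ℝ) : ℕ → Set (Fin d → ℝ)
  | 0 => proj d (ρ 0) X0
  | k + 1 => ⋃ y ∈ discReach d F X0 h ρ k,
      proj d (ρ (k + 1)) ((fun f => y + h (k + 1) • f) '' F y)


/-! ## Auxiliary development -/

variable {d : ℕ}

lemma exists_grid_close {ρ : ℝ} (hρ : 0 < ρ) (w : Fin d → ℝ) :
    ∃ g ∈ grid d ρ, ‖g - w‖ ≤ ρ / 2 := by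
  refine ⟨fun i => ρ * round (w i / ρ), fun i => ⟨round (w i / ρ), rfl⟩, ?_⟩
  rw [pi_norm_le_iff_of_nonneg (by positivity)]
  intro i
  have heq : ((fun i => ρ * (round (w i / ρ) : ℝ)) - w) i = -(ρ * (w i / ρ - round (w i / ρ))) := by
    simp only [Pi.sub_apply]; field_simp; ring
  rw [heq, Real.norm_eq_abs, abs_neg, abs_mul, abs_of_pos hρ]
  have h2 := abs_sub_round (w i / ρ)
  nlinarith [abs_nonneg (w i / ρ - round (w i / ρ))]

lemma exists_proj_close {A : Set (Fin d → ℝ)} {w : Fin d → ℝ} (hw : w ∈ A) {ρ : ℝ}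
    (hρ : 0 < ρ) : ∃ g ∈ proj d ρ A, ‖g - w‖ ≤ ρ / 2 := by
  obtain ⟨g, hg, hgw⟩ := exists_grid_close hρ w
  refine ⟨g, ⟨?_, hg⟩, hgw⟩
  refine Set.mem_add.2 ⟨w, hw, g - w, ?_, by abel⟩
  simpa [Metric.mem_closedBall, dist_eq_norm] using hgw

lemma exists_of_mem_proj {A : Set (Fin d → ℝ)} {g : Fin d → ℝ} {ρ : ℝ}
    (hg : g ∈ proj d ρ A) : ∃ a ∈ A, ‖g - a‖ ≤ ρ / 2 := by
  obtain ⟨hmem, -⟩ := hg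
  rcases Set.mem_add.1 hmem with ⟨a, ha, e, he, hae⟩
  refine ⟨a, ha, ?_⟩
  have heq : g - a = e := by rw [← hae]; abel
  rw [heq]
  simpa [Metric.mem_closedBall, dist_eq_norm] using he

/-- key exp inequality: `u ≤ exp u - 1`. -/
lemma le_exp_sub_one {u : ℝ} : u ≤ Real.exp u - 1 := by
  have := Real.add_one_le_exp u; linarith

lemma half_le_exp_term {u ρ : ℝ} (hu : 0 < u) (hρ : 0 < ρ) :
    ρ / 2 ≤ (Real.exp u - 1) * (ρ / (2 * u)) := by
  have h1 : u ≤ Real.exp u - 1 := le_exp_sub_one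
  rw [← sub_nonneg]
  have heq : (Real.exp u - 1) * (ρ / (2 * u)) - ρ / 2 = ((Real.exp u - 1) - u) * (ρ / (2 * u)) := by
    field_simp
  rw [heq]
  have : (0:ℝ) ≤ (Real.exp u - 1) - u := by linarith
  positivity
section FStuff

variable {d : ℕ} {L P : ℝ} {F : (Fin d → ℝ) → Set (Fin d → ℝ)}

lemma F_edist_ne_top (hFne : ∀ x, (F x).Nonempty) (hFc : ∀ x, IsCompact (F x))
    (p q : Fin d → ℝ) : EMetric.hausdorffEdist (F p) (F q) ≠ ⊤ :=
  Metric.hausdorffEdist_ne_top_of_nonempty_of_bounded (hFne p) (hFne q) (hFc p).isBounded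
    (hFc q).isBounded

lemma infDist_F_le (hFne : ∀ x, (F x).Nonempty) (hFc : ∀ x, IsCompact (F x))
    (hFlip : ∀ x y, Metric.hausdorffDist (F x) (F y) ≤ L * ‖x - y‖)
    {u p : Fin d → ℝ} (hu : u ∈ F p) (q : Fin d → ℝ) :
    Metric.infDist u (F q) ≤ L * ‖p - q‖ :=
  le_trans (Metric.infDist_le_hausdorffDist_of_mem hu (F_edist_ne_top hFne hFc p q)) (hFlip p q)

lemma exists_close_F (hFne : ∀ x, (F x).Nonempty) (hFc : ∀ x, IsCompact (F x))
    (hFlip : ∀ x y, Metric.hausdorffDist (F x) (F y) ≤ L * ‖x - y‖)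
    {u p : Fin d → ℝ} (hu : u ∈ F p) (q : Fin d → ℝ) :
    ∃ w ∈ F q, dist u w ≤ L * ‖p - q‖ := by
  obtain ⟨w, hw, heq⟩ := (hFc q).exists_infDist_eq_dist (hFne q) u
  exact ⟨w, hw, heq ▸ infDist_F_le hFne hFc hFlip hu q⟩

/-- A solution of the differential inclusion on the interval `[s0,s1]`. -/
def SolOn (F : (Fin d → ℝ) → Set (Fin d → ℝ)) (x x' : ℝ → Fin d → ℝ) (s0 s1 : ℝ) : Prop :=
  IntegrableOn x' (Icc s0 s1) volume ∧
  (∀ t ∈ Icc s0 s1, x t = x s0 + ∫ s in Ioc s0 t, x' s) ∧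
  (∀ᵐ s ∂(volume.restrict (Ioc s0 s1)), x' s ∈ F (x s))

lemma integrableOn_null' {g : ℝ → Fin d → ℝ} {c : ℝ} : IntegrableOn g {c} volume := by
  have : (volume : Measure ℝ).restrict {c} = 0 := by
    rw [Measure.restrict_eq_zero]; simp
  rw [IntegrableOn, this]; exact integrable_zero_measure

lemma SolOn.glue {x1 x1' x2 x2' : ℝ → Fin d → ℝ} {s0 c s1 : ℝ} (hc0 : s0 ≤ c) (hc1 : c ≤ s1)
    (h1 : SolOn F x1 x1' s0 c) (h2 : SolOn F x2 x2' c s1) (hx : x2 c = x1 c) :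
    SolOn F (fun t => if t ≤ c then x1 t else x2 t) (fun t => if t ≤ c then x1' t else x2' t)
      s0 s1 := by
  obtain ⟨hi1, he1, hm1⟩ := h1
  obtain ⟨hi2, he2, hm2⟩ := h2
  set y : ℝ → Fin d → ℝ := fun t => if t ≤ c then x1 t else x2 t with hy
  set y' : ℝ → Fin d → ℝ := fun t => if t ≤ c then x1' t else x2' t with hy'
  have hy0 : y s0 = x1 s0 := if_pos hc0
  have hyc : y c = x1 c := if_pos le_rfl
  -- integrability
  have hIoc1 : IntegrableOn y' (Ioc s0 c) volume := by
    refine (hi1.mono_set Ioc_subset_Icc_self).congr_fun (fun s hs => ?_) measurableSet_Ioc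
    exact (if_pos hs.2).symm
  have hIoc2 : IntegrableOn y' (Ioc c s1) volume := by
    refine (hi2.mono_set Ioc_subset_Icc_self).congr_fun (fun s hs => ?_) measurableSet_Ioc
    exact (if_neg (not_le.2 hs.1)).symm
  have hint : IntegrableOn y' (Icc s0 s1) volume := by
    have hsub : Icc s0 s1 ⊆ {s0} ∪ (Ioc s0 c ∪ Ioc c s1) := by
      intro s hs
      rcases eq_or_lt_of_le hs.1 with h | h
      · exact Or.inl (by simp [← h])
      · by_cases hsc : s ≤ c
        · exact Or.inr (Or.inl ⟨h, hsc⟩)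
        · exact Or.inr (Or.inr ⟨not_le.1 hsc, hs.2⟩)
    exact (integrableOn_null'.union (hIoc1.union hIoc2)).mono_set hsub
  refine ⟨hint, ?_, ?_⟩
  · intro s hs
    by_cases hsc : s ≤ c
    · have : y s = x1 s := if_pos hsc
      rw [this, hy0, he1 s ⟨hs.1, hsc⟩]
      congr 1
      refine (setIntegral_congr_fun measurableSet_Ioc fun u hu => ?_).symm
      exact if_pos (le_trans hu.2 hsc)
    · push_neg at hsc
      have hys : y s = x2 s := if_neg (not_le.2 hsc)
      have hsplit : Ioc s0 s = Ioc s0 c ∪ Ioc c s := Ioc_union_Ioc_eq_Ioc hc0 hsc.le |>.symm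
      have hIoc2' : IntegrableOn y' (Ioc c s) volume :=
        hIoc2.mono_set (Ioc_subset_Ioc le_rfl hs.2)
      rw [hys, he2 s ⟨hsc.le, hs.2⟩, hx, he1 c ⟨hc0, le_rfl⟩, hy0, hsplit,
        setIntegral_union (Set.Ioc_disjoint_Ioc_of_le le_rfl) measurableSet_Ioc hIoc1 hIoc2']
      have e1 : ∫ u in Ioc s0 c, y' u = ∫ u in Ioc s0 c, x1' u :=
        setIntegral_congr_fun measurableSet_Ioc fun u hu => if_pos hu.2
      have e2 : ∫ u in Ioc c s, y' u = ∫ u in Ioc c s, x2' u :=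
        setIntegral_congr_fun measurableSet_Ioc fun u hu => if_neg (not_le.2 hu.1)
      rw [e1, e2]; abel
  · have hsplit : Ioc s0 s1 = Ioc s0 c ∪ Ioc c s1 := (Ioc_union_Ioc_eq_Ioc hc0 hc1).symm
    rw [hsplit, Measure.restrict_union (Set.Ioc_disjoint_Ioc_of_le le_rfl) measurableSet_Ioc,
      ae_add_measure_iff]
    constructor
    · filter_upwards [hm1, ae_restrict_mem measurableSet_Ioc] with s h hs
      have e1 : y' s = x1' s := if_pos hs.2
      have e2 : y s = x1 s := if_pos hs.2
      rw [e1, e2]; exact h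
    · filter_upwards [hm2, ae_restrict_mem measurableSet_Ioc] with s h hs
      have e1 : y' s = x2' s := if_neg (not_le.2 hs.1)
      have e2 : y s = x2 s := if_neg (not_le.2 hs.1)
      rw [e1, e2]; exact h

end FStuff
/-! ### The comparison functions for the Filippov iteration -/

/-- `phi A B L m s = A (Ls)^m/m! + B 2^{-m} ∑_{j<m} (2Ls)^j/j!`. -/
def phi (A B L : ℝ) (m : ℕ) (s : ℝ) : ℝ :=
  (A * L ^ m / m.factorial) * s ^ m +
    ∑ j ∈ Finset.range m, (B * (2⁻¹ : ℝ) ^ m * (2 * L) ^ j / j.factorial) * s ^ j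

lemma phi_zero (A B L s : ℝ) : phi A B L 0 s = A := by simp [phi]

lemma phi_nonneg {A B L : ℝ} (hA : 0 ≤ A) (hB : 0 ≤ B) (hL : 0 ≤ L) (m : ℕ) {s : ℝ}
    (hs : 0 ≤ s) : 0 ≤ phi A B L m s := by
  unfold phi
  have h1 : (0:ℝ) ≤ (A * L ^ m / m.factorial) * s ^ m := by positivity
  have h2 : (0:ℝ) ≤ ∑ j ∈ Finset.range m,
      (B * (2⁻¹ : ℝ) ^ m * (2 * L) ^ j / j.factorial) * s ^ j := by
    refine Finset.sum_nonneg fun j _ => by positivity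
  linarith

lemma phi_mono {A B L : ℝ} (hA : 0 ≤ A) (hB : 0 ≤ B) (hL : 0 ≤ L) (m : ℕ) {s s' : ℝ}
    (hs : 0 ≤ s) (hss' : s ≤ s') : phi A B L m s ≤ phi A B L m s' := by
  unfold phi
  have h1 : (A * L ^ m / m.factorial) * s ^ m ≤ (A * L ^ m / m.factorial) * s' ^ m := by
    have := pow_le_pow_left₀ hs hss' m
    have h0 : (0:ℝ) ≤ A * L ^ m / m.factorial := by positivity
    nlinarith
  have h2 : ∀ j ∈ Finset.range m,
      (B * (2⁻¹ : ℝ) ^ m * (2 * L) ^ j / j.factorial) * s ^ j ≤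
      (B * (2⁻¹ : ℝ) ^ m * (2 * L) ^ j / j.factorial) * s' ^ j := by
    intro j _
    have := pow_le_pow_left₀ hs hss' j
    have h0 : (0:ℝ) ≤ B * (2⁻¹ : ℝ) ^ m * (2 * L) ^ j / j.factorial := by positivity
    nlinarith
  exact add_le_add h1 (Finset.sum_le_sum h2)

lemma int_cpow (c : ℝ) (j : ℕ) (s : ℝ) :
    ∫ σ in (0:ℝ)..s, c * σ ^ j = c * (s ^ (j + 1) / (j + 1)) := by
  rw [intervalIntegral.integral_const_mul, integral_pow]
  have : (0:ℝ) ^ (j+1) = 0 := zero_pow (Nat.succ_ne_zero j)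
  rw [this]
  ring

lemma phi_intervalIntegrable (A B L : ℝ) (m : ℕ) (a b : ℝ) :
    IntervalIntegrable (phi A B L m) MeasureTheory.volume a b := by
  have : Continuous (phi A B L m) := by
    unfold phi
    fun_prop
  exact this.intervalIntegrable a b

lemma phi_rec (A B L : ℝ) (m : ℕ) (s : ℝ) :
    phi A B L (m + 1) s = B * (2⁻¹ : ℝ) ^ (m + 1) + L * ∫ σ in (0:ℝ)..s, phi A B L m σ := by
  have hint : ∫ σ in (0:ℝ)..s, phi A B L m σ
      = (A * L ^ m / m.factorial) * (s ^ (m + 1) / (m + 1)) +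
        ∑ j ∈ Finset.range m,
          (B * (2⁻¹ : ℝ) ^ m * (2 * L) ^ j / j.factorial) * (s ^ (j + 1) / (j + 1)) := by
    unfold phi
    rw [intervalIntegral.integral_add]
    · rw [int_cpow, intervalIntegral.integral_finset_sum]
      · congr 1
        exact Finset.sum_congr rfl fun j _ => int_cpow _ _ _
      · intro j _
        exact (by fun_prop : Continuous fun σ : ℝ =>
          (B * (2⁻¹ : ℝ) ^ m * (2 * L) ^ j / j.factorial) * σ ^ j).intervalIntegrable _ _
    · exact (by fun_prop : Continuous fun σ : ℝ =>
        (A * L ^ m / m.factorial) * σ ^ m).intervalIntegrable _ _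
    · refine (Continuous.intervalIntegrable ?_ _ _)
      fun_prop
  rw [hint]
  unfold phi
  rw [Finset.sum_range_succ']
  have hfac : ∀ j : ℕ, ((j.factorial : ℝ)) ≠ 0 := fun j => Nat.cast_ne_zero.2 (Nat.factorial_ne_zero j)
  have hterm : ∀ j ∈ Finset.range m,
      (B * (2⁻¹ : ℝ) ^ (m + 1) * (2 * L) ^ (j + 1) / (j + 1).factorial) * s ^ (j + 1)
      = L * ((B * (2⁻¹ : ℝ) ^ m * (2 * L) ^ j / j.factorial) * (s ^ (j + 1) / (j + 1))) := by
    intro j _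
    have h1 : ((j+1).factorial : ℝ) = (j + 1) * j.factorial := by
      rw [Nat.factorial_succ]; push_cast; ring
    rw [h1]
    have h2 : ((j:ℝ) + 1) ≠ 0 := by positivity
    field_simp
    ring
  have hA : (A * L ^ (m+1) / (m+1).factorial) * s ^ (m+1)
      = L * ((A * L ^ m / m.factorial) * (s ^ (m + 1) / (m + 1))) := by
    have h1 : ((m+1).factorial : ℝ) = (m + 1) * m.factorial := by
      rw [Nat.factorial_succ]; push_cast; ring
    rw [h1]
    have h2 : ((m:ℝ) + 1) ≠ 0 := by positivity
    field_simp
    ring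
  rw [Finset.sum_congr rfl hterm, hA, ← Finset.mul_sum]
  simp only [pow_zero, Nat.factorial_zero, Nat.cast_one, mul_one, div_one]
  ring

/-- Uniform bound on `phi` on `[0,h]`. -/
lemma phi_le {A B L h : ℝ} (hA : 0 ≤ A) (hB : 0 ≤ B) (hL : 0 ≤ L) (hh : 0 ≤ h) (m : ℕ)
    {s : ℝ} (hs0 : 0 ≤ s) (hs : s ≤ h) :
    phi A B L m s ≤ A * (L * h) ^ m / m.factorial + B * (2⁻¹ : ℝ) ^ m * Real.exp (2 * L * h) := by
  have hmono := phi_mono hA hB hL m hs0 hs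
  refine le_trans hmono ?_
  unfold phi
  have h1 : (A * L ^ m / m.factorial) * h ^ m = A * (L * h) ^ m / m.factorial := by
    rw [mul_pow]; ring
  rw [h1]
  have h2 : ∑ j ∈ Finset.range m, (B * (2⁻¹ : ℝ) ^ m * (2 * L) ^ j / j.factorial) * h ^ j
      ≤ B * (2⁻¹ : ℝ) ^ m * Real.exp (2 * L * h) := by
    have e1 : ∀ j ∈ Finset.range m,
        (B * (2⁻¹ : ℝ) ^ m * (2 * L) ^ j / j.factorial) * h ^ j
        = (B * (2⁻¹ : ℝ) ^ m) * ((2 * L * h) ^ j / j.factorial) := by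
      intro j _
      rw [mul_pow (2*L) h j]
      ring
    rw [Finset.sum_congr rfl e1, ← Finset.mul_sum]
    have h3 := Real.sum_le_exp_of_nonneg (by positivity : (0:ℝ) ≤ 2 * L * h) m
    have h4 : (0:ℝ) ≤ B * (2⁻¹ : ℝ) ^ m := by positivity
    nlinarith
  linarith
/-! ### The Filippov construction -/

section Tracking

variable {d : ℕ} {L P : ℝ} {F : (Fin d → ℝ) → Set (Fin d → ℝ)}

/-- a point of `F y` nearest to `w`. -/
def sel (hFne : ∀ x, (F x).Nonempty) (hFc : ∀ x, IsCompact (F x)) (y w : Fin d → ℝ) :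
    Fin d → ℝ :=
  Classical.choose ((hFc y).exists_infDist_eq_dist (hFne y) w)

lemma sel_mem (hFne : ∀ x, (F x).Nonempty) (hFc : ∀ x, IsCompact (F x)) (y w : Fin d → ℝ) :
    sel hFne hFc y w ∈ F y :=
  (Classical.choose_spec ((hFc y).exists_infDist_eq_dist (hFne y) w)).1

lemma sel_dist (hFne : ∀ x, (F x).Nonempty) (hFc : ∀ x, IsCompact (F x)) (y w : Fin d → ℝ) :
    dist w (sel hFne hFc y w) = Metric.infDist w (F y) :=
  (Classical.choose_spec ((hFc y).exists_infDist_eq_dist (hFne y) w)).2.symm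

/-- the dyadic Euler–Filippov iteration: values of the `m`-th derivative approximation
on the pieces of the `m`-th dyadic partition. -/
def eC (hFne : ∀ x, (F x).Nonempty) (hFc : ∀ x, IsCompact (F x)) (s0 : ℝ)
    (a v : Fin d → ℝ) (ℓ : ℕ → ℝ) : ℕ → ℕ → (Fin d → ℝ)
  | 0, _ => v
  | m + 1, i =>
      sel hFne hFc
        (a + ∫ s in Set.Ioc s0 (s0 + i * ℓ (m + 1)),
          eC hFne hFc s0 a v ℓ m ⌊(s - s0) / ℓ m⌋₊)
        (eC hFne hFc s0 a v ℓ m (i / 2))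

variable (hFne : ∀ x, (F x).Nonempty) (hFc : ∀ x, IsCompact (F x)) (s0 : ℝ)
    (a v : Fin d → ℝ) (ℓ : ℕ → ℝ)

/-- the `m`-th approximate derivative. -/
def eU (m : ℕ) (t : ℝ) : Fin d → ℝ :=
  eC hFne hFc s0 a v ℓ m ⌊(t - s0) / ℓ m⌋₊

/-- the `m`-th approximate solution. -/
def eX (m : ℕ) (t : ℝ) : Fin d → ℝ :=
  a + ∫ s in Set.Ioc s0 t, eU hFne hFc s0 a v ℓ m s

lemma eU_zero (t : ℝ) : eU hFne hFc s0 a v ℓ 0 t = v := rfl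

lemma eC_succ (m : ℕ) (i : ℕ) :
    eC hFne hFc s0 a v ℓ (m + 1) i =
      sel hFne hFc (eX hFne hFc s0 a v ℓ m (s0 + i * ℓ (m + 1)))
        (eC hFne hFc s0 a v ℓ m (i / 2)) := rfl

lemma eC_norm_le (hv : ‖v‖ ≤ P) (hFbd : ∀ x, ∀ f ∈ F x, ‖f‖ ≤ P) (m i : ℕ) :
    ‖eC hFne hFc s0 a v ℓ m i‖ ≤ P := by
  cases m with
  | zero => exact hv
  | succ m => exact hFbd _ _ (sel_mem hFne hFc _ _)

lemma eU_norm_le (hv : ‖v‖ ≤ P) (hFbd : ∀ x, ∀ f ∈ F x, ‖f‖ ≤ P) (m : ℕ) (t : ℝ) :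
    ‖eU hFne hFc s0 a v ℓ m t‖ ≤ P :=
  eC_norm_le hFne hFc s0 a v ℓ hv hFbd m _

lemma eU_measurable (m : ℕ) : Measurable (eU hFne hFc s0 a v ℓ m) := by
  have h1 : Measurable fun t : ℝ => ⌊(t - s0) / ℓ m⌋₊ :=
    Nat.measurable_floor.comp ((measurable_id.sub_const s0).div_const _)
  exact measurable_from_top.comp h1

lemma integrableOn_of_bdd {g : ℝ → Fin d → ℝ} (hm : Measurable g) {C : ℝ}
    (hC : ∀ t, ‖g t‖ ≤ C) {s : Set ℝ} (hs : volume s ≠ ⊤) :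
    IntegrableOn g s volume := by
  have : IsFiniteMeasure ((volume : Measure ℝ).restrict s) :=
    ⟨by rwa [Measure.restrict_apply_univ, lt_top_iff_ne_top]⟩
  exact Integrable.mono' (integrable_const C) hm.aestronglyMeasurable (ae_of_all _ fun t => hC t)

lemma eU_integrableOn (hv : ‖v‖ ≤ P) (hFbd : ∀ x, ∀ f ∈ F x, ‖f‖ ≤ P) (m : ℕ)
    {s : Set ℝ} (hs : volume s ≠ ⊤) :
    IntegrableOn (eU hFne hFc s0 a v ℓ m) s volume :=
  integrableOn_of_bdd (eU_measurable hFne hFc s0 a v ℓ m)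
    (eU_norm_le hFne hFc s0 a v ℓ hv hFbd m) hs

lemma eX_s0 : eX hFne hFc s0 a v ℓ m s0 = a := by
  unfold eX
  simp [Set.Ioc_self]

lemma eX_sub (hv : ‖v‖ ≤ P) (hFbd : ∀ x, ∀ f ∈ F x, ‖f‖ ≤ P) (m : ℕ) {r t : ℝ}
    (hr : s0 ≤ r) (hrt : r ≤ t) :
    eX hFne hFc s0 a v ℓ m t - eX hFne hFc s0 a v ℓ m r
      = ∫ s in Set.Ioc r t, eU hFne hFc s0 a v ℓ m s := by
  unfold eX
  have hsplit : Set.Ioc s0 t = Set.Ioc s0 r ∪ Set.Ioc r t := (Set.Ioc_union_Ioc_eq_Ioc hr hrt).symm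
  rw [hsplit, setIntegral_union (Set.Ioc_disjoint_Ioc_of_le le_rfl) measurableSet_Ioc
    (eU_integrableOn hFne hFc s0 a v ℓ hv hFbd m (by simp))
    (eU_integrableOn hFne hFc s0 a v ℓ hv hFbd m (by simp))]
  abel

lemma eX_lip (hv : ‖v‖ ≤ P) (hFbd : ∀ x, ∀ f ∈ F x, ‖f‖ ≤ P) (m : ℕ) {r t : ℝ}
    (hr : s0 ≤ r) (hrt : r ≤ t) :
    ‖eX hFne hFc s0 a v ℓ m t - eX hFne hFc s0 a v ℓ m r‖ ≤ P * (t - r) := by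
  rw [eX_sub hFne hFc s0 a v ℓ hv hFbd m hr hrt]
  have := norm_setIntegral_le_of_norm_le_const (μ := volume) (s := Set.Ioc r t)
    (f := eU hFne hFc s0 a v ℓ m) (C := P) (by simp)
    (fun x _ => eU_norm_le hFne hFc s0 a v ℓ hv hFbd m x)
  calc ‖∫ s in Set.Ioc r t, eU hFne hFc s0 a v ℓ m s‖
      ≤ P * (volume (Set.Ioc r t)).toReal := this
    _ = P * (t - r) := by rw [Real.volume_Ioc, ENNReal.toReal_ofReal (by linarith)]

/-! ### dyadic partitions and the defect invariant -/

/-- piece lengths of the dyadic partitions of `[s0,s1]`. -/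
def dyadic (s0 s1 : ℝ) (N : ℕ) : ℕ → ℝ := fun m => (s1 - s0) / (N * 2 ^ m)

lemma phi_continuous (A B L : ℝ) (m : ℕ) : Continuous (phi A B L m) := by
  unfold phi; fun_prop

variable {s0 s1 : ℝ} {N : ℕ}

lemma dyadic_pos (hs : s0 < s1) (hN : 0 < N) (m : ℕ) : 0 < dyadic s0 s1 N m := by
  unfold dyadic
  have h1 : (0:ℝ) < N := by exact_mod_cast hN
  have h2 : (0:ℝ) < s1 - s0 := by linarith
  positivity

lemma dyadic_succ (m : ℕ) : dyadic s0 s1 N m = 2 * dyadic s0 s1 N (m + 1) := by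
  unfold dyadic
  rw [pow_succ]
  by_cases hN : (N:ℝ) = 0
  · simp [hN]
  · field_simp

lemma idx_coherent (hs : s0 < s1) (hN : 0 < N) (m : ℕ) {t : ℝ} (ht : s0 ≤ t) :
    ⌊(t - s0) / dyadic s0 s1 N m⌋₊ = ⌊(t - s0) / dyadic s0 s1 N (m + 1)⌋₊ / 2 := by
  rw [dyadic_succ m]
  have h2 : (t - s0) / (2 * dyadic s0 s1 N (m + 1))
      = ((t - s0) / dyadic s0 s1 N (m + 1)) / (2:ℕ) := by
    push_cast
    rw [div_div]
    ring_nf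
  rw [h2, Nat.floor_div_natCast]

lemma tau_le (hs : s0 < s1) (hN : 0 < N) (m : ℕ) {t : ℝ} (ht0 : s0 ≤ t) :
    s0 + (⌊(t - s0) / dyadic s0 s1 N m⌋₊ : ℝ) * dyadic s0 s1 N m ≤ t := by
  have hpos := dyadic_pos hs hN m
  have h1 : (⌊(t - s0) / dyadic s0 s1 N m⌋₊ : ℝ) ≤ (t - s0) / dyadic s0 s1 N m :=
    Nat.floor_le (div_nonneg (by linarith) hpos.le)
  have h2 : (⌊(t - s0) / dyadic s0 s1 N m⌋₊ : ℝ) * dyadic s0 s1 N m ≤ t - s0 := by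
    rw [← le_div_iff₀ hpos]; exact h1
  linarith

lemma tau_close (hs : s0 < s1) (hN : 0 < N) (m : ℕ) {t : ℝ} (ht0 : s0 ≤ t) :
    t - (s0 + (⌊(t - s0) / dyadic s0 s1 N m⌋₊ : ℝ) * dyadic s0 s1 N m) ≤ dyadic s0 s1 N m := by
  have hpos := dyadic_pos hs hN m
  have h1 : (t - s0) / dyadic s0 s1 N m < ⌊(t - s0) / dyadic s0 s1 N m⌋₊ + 1 :=
    Nat.lt_floor_add_one _
  have h2 : t - s0 < ((⌊(t - s0) / dyadic s0 s1 N m⌋₊ : ℝ) + 1) * dyadic s0 s1 N m := by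
    rw [← div_lt_iff₀ hpos]; exact h1
  nlinarith

section WithF

variable {d : ℕ} {L P : ℝ} {F : (Fin d → ℝ) → Set (Fin d → ℝ)}
variable {a b v : Fin d → ℝ}

lemma eU_const (hFne : ∀ x, (F x).Nonempty) (hFc : ∀ x, IsCompact (F x))
    (hs : s0 < s1) (hN : 0 < N) (m : ℕ) {t : ℝ} (ht0 : s0 ≤ t) :
    eU hFne hFc s0 a v (dyadic s0 s1 N) m
        (s0 + (⌊(t - s0) / dyadic s0 s1 N (m + 1)⌋₊ : ℝ) * dyadic s0 s1 N (m + 1))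
      = eU hFne hFc s0 a v (dyadic s0 s1 N) m t := by
  set i := ⌊(t - s0) / dyadic s0 s1 N (m + 1)⌋₊ with hi
  have hpos := dyadic_pos hs hN (m + 1)
  have hτ0 : s0 ≤ s0 + (i:ℝ) * dyadic s0 s1 N (m + 1) := by
    have : (0:ℝ) ≤ (i:ℝ) * dyadic s0 s1 N (m + 1) := by positivity
    linarith
  unfold eU
  congr 1
  have hexact : (s0 + (i:ℝ) * dyadic s0 s1 N (m + 1) - s0) / dyadic s0 s1 N (m + 1) = (i:ℝ) := by
    field_simp; ring
  rw [idx_coherent hs hN m hτ0, idx_coherent hs hN m ht0, hexact, Nat.floor_natCast]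

lemma eU_succ (hFne : ∀ x, (F x).Nonempty) (hFc : ∀ x, IsCompact (F x))
    (hs : s0 < s1) (hN : 0 < N) (m : ℕ) {t : ℝ} (ht0 : s0 ≤ t) :
    eU hFne hFc s0 a v (dyadic s0 s1 N) (m + 1) t
      = sel hFne hFc
          (eX hFne hFc s0 a v (dyadic s0 s1 N) m
            (s0 + (⌊(t - s0) / dyadic s0 s1 N (m + 1)⌋₊ : ℝ) * dyadic s0 s1 N (m + 1)))
          (eU hFne hFc s0 a v (dyadic s0 s1 N) m
            (s0 + (⌊(t - s0) / dyadic s0 s1 N (m + 1)⌋₊ : ℝ) * dyadic s0 s1 N (m + 1))) := by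
  set i := ⌊(t - s0) / dyadic s0 s1 N (m + 1)⌋₊ with hi
  have hpos := dyadic_pos hs hN (m + 1)
  have hτ0 : s0 ≤ s0 + (i:ℝ) * dyadic s0 s1 N (m + 1) := by
    have : (0:ℝ) ≤ (i:ℝ) * dyadic s0 s1 N (m + 1) := by positivity
    linarith
  have h1 : eU hFne hFc s0 a v (dyadic s0 s1 N) (m + 1) t
      = eC hFne hFc s0 a v (dyadic s0 s1 N) (m + 1) i := rfl
  rw [h1, eC_succ]
  have hexact : (s0 + (i:ℝ) * dyadic s0 s1 N (m + 1) - s0) / dyadic s0 s1 N (m + 1) = (i:ℝ) := by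
    field_simp; ring
  have h2 : eC hFne hFc s0 a v (dyadic s0 s1 N) m (i / 2)
      = eU hFne hFc s0 a v (dyadic s0 s1 N) m
          (s0 + (i:ℝ) * dyadic s0 s1 N (m + 1)) := by
    unfold eU
    rw [idx_coherent hs hN m hτ0, hexact, Nat.floor_natCast]
  rw [h2]

end WithF

section Invariant

variable {d : ℕ} {L P : ℝ} {F : (Fin d → ℝ) → Set (Fin d → ℝ)}
variable {s0 s1 : ℝ} {N : ℕ} {a b v : Fin d → ℝ}

lemma step_udiff (hL : 0 < L) (hP : 0 < P)
    (hFne : ∀ x, (F x).Nonempty) (hFc : ∀ x, IsCompact (F x))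
    (hs : s0 < s1) (hN : 0 < N) (m : ℕ)
    (IH : ∀ t ∈ Set.Icc s0 s1,
      Metric.infDist (eU hFne hFc s0 a v (dyadic s0 s1 N) m t)
          (F (eX hFne hFc s0 a v (dyadic s0 s1 N) m t))
        ≤ phi (L * (‖a - b‖ + P * (s1 - s0))) (L * P * (s1 - s0) / N) L m (t - s0)) :
    ∀ t ∈ Set.Icc s0 s1,
      ‖eU hFne hFc s0 a v (dyadic s0 s1 N) (m + 1) t
        - eU hFne hFc s0 a v (dyadic s0 s1 N) m t‖
        ≤ phi (L * (‖a - b‖ + P * (s1 - s0))) (L * P * (s1 - s0) / N) L m (t - s0) := by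
  intro t ht
  have ht0 : s0 ≤ t := ht.1
  set τ : ℝ := s0 + (⌊(t - s0) / dyadic s0 s1 N (m + 1)⌋₊ : ℝ) * dyadic s0 s1 N (m + 1) with hτ
  have hτt : τ ≤ t := tau_le hs hN (m + 1) ht0
  have hτ0 : s0 ≤ τ := by
    have hpos := dyadic_pos hs hN (m + 1)
    have : (0:ℝ) ≤ (⌊(t - s0) / dyadic s0 s1 N (m + 1)⌋₊ : ℝ) * dyadic s0 s1 N (m + 1) := by
      positivity
    simp only [hτ]; linarith
  have hτ1 : τ ≤ s1 := hτt.trans ht.2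
  rw [eU_succ hFne hFc hs hN m ht0, ← eU_const hFne hFc hs hN m ht0, ← hτ]
  have h1 : ‖sel hFne hFc (eX hFne hFc s0 a v (dyadic s0 s1 N) m τ)
        (eU hFne hFc s0 a v (dyadic s0 s1 N) m τ)
      - eU hFne hFc s0 a v (dyadic s0 s1 N) m τ‖
      = dist (eU hFne hFc s0 a v (dyadic s0 s1 N) m τ)
          (sel hFne hFc (eX hFne hFc s0 a v (dyadic s0 s1 N) m τ)
            (eU hFne hFc s0 a v (dyadic s0 s1 N) m τ)) := by
    rw [dist_eq_norm, norm_sub_rev]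
  rw [h1, sel_dist]
  have hs10 : (0:ℝ) ≤ s1 - s0 := by linarith
  have hA0 : 0 ≤ L * (‖a - b‖ + P * (s1 - s0)) :=
    mul_nonneg hL.le (add_nonneg (norm_nonneg _) (mul_nonneg hP.le hs10))
  have hB0 : 0 ≤ L * P * (s1 - s0) / N :=
    div_nonneg (mul_nonneg (mul_nonneg hL.le hP.le) hs10) (Nat.cast_nonneg N)
  refine le_trans (IH τ ⟨hτ0, hτ1⟩) (phi_mono hA0 hB0 hL.le m
    (by linarith) (by linarith))

lemma step_xdiff (hL : 0 < L) (hP : 0 < P)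
    (hFne : ∀ x, (F x).Nonempty) (hFc : ∀ x, IsCompact (F x))
    (hFbd : ∀ x, ∀ f ∈ F x, ‖f‖ ≤ P) (hvP : ‖v‖ ≤ P)
    (hs : s0 < s1) (hN : 0 < N) (m : ℕ)
    (IH : ∀ t ∈ Set.Icc s0 s1,
      Metric.infDist (eU hFne hFc s0 a v (dyadic s0 s1 N) m t)
          (F (eX hFne hFc s0 a v (dyadic s0 s1 N) m t))
        ≤ phi (L * (‖a - b‖ + P * (s1 - s0))) (L * P * (s1 - s0) / N) L m (t - s0)) :
    ∀ t ∈ Set.Icc s0 s1,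
      ‖eX hFne hFc s0 a v (dyadic s0 s1 N) (m + 1) t
        - eX hFne hFc s0 a v (dyadic s0 s1 N) m t‖
        ≤ ∫ σ in (0:ℝ)..(t - s0),
            phi (L * (‖a - b‖ + P * (s1 - s0))) (L * P * (s1 - s0) / N) L m σ := by
  intro t ht
  have ht0 : s0 ≤ t := ht.1
  set A := L * (‖a - b‖ + P * (s1 - s0)) with hA
  set B := L * P * (s1 - s0) / N with hB
  have hint1 := eU_integrableOn hFne hFc s0 a v (dyadic s0 s1 N) hvP hFbd (m + 1)
    (s := Set.Ioc s0 t) (by simp)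
  have hint2 := eU_integrableOn hFne hFc s0 a v (dyadic s0 s1 N) hvP hFbd m
    (s := Set.Ioc s0 t) (by simp)
  have hsub : eX hFne hFc s0 a v (dyadic s0 s1 N) (m + 1) t
      - eX hFne hFc s0 a v (dyadic s0 s1 N) m t
      = ∫ s in Set.Ioc s0 t, (eU hFne hFc s0 a v (dyadic s0 s1 N) (m + 1) s
          - eU hFne hFc s0 a v (dyadic s0 s1 N) m s) := by
    unfold eX
    rw [add_sub_add_left_eq_sub, ← integral_sub hint1 hint2]
  rw [hsub]
  have hgcont : Continuous fun s : ℝ => phi A B L m (s - s0) :=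
    (phi_continuous A B L m).comp (continuous_id.sub continuous_const)
  have hgint : IntegrableOn (fun s : ℝ => phi A B L m (s - s0)) (Set.Ioc s0 t) volume :=
    hgcont.integrableOn_Ioc
  have hbound : ∀ᵐ s ∂(volume.restrict (Set.Ioc s0 t)),
      ‖eU hFne hFc s0 a v (dyadic s0 s1 N) (m + 1) s
        - eU hFne hFc s0 a v (dyadic s0 s1 N) m s‖ ≤ phi A B L m (s - s0) := by
    filter_upwards [ae_restrict_mem measurableSet_Ioc] with s hmem
    exact step_udiff hL hP hFne hFc hs hN m IH s ⟨hmem.1.le, hmem.2.trans ht.2⟩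
  calc ‖∫ s in Set.Ioc s0 t, (eU hFne hFc s0 a v (dyadic s0 s1 N) (m + 1) s
          - eU hFne hFc s0 a v (dyadic s0 s1 N) m s)‖
      ≤ ∫ s in Set.Ioc s0 t, phi A B L m (s - s0) := norm_integral_le_of_norm_le hgint hbound
    _ = ∫ σ in (0:ℝ)..(t - s0), phi A B L m σ := by
        rw [← intervalIntegral.integral_of_le ht0,
          intervalIntegral.integral_comp_sub_right (phi A B L m) s0, sub_self]

lemma defect_invariant (hL : 0 < L) (hP : 0 < P)
    (hFne : ∀ x, (F x).Nonempty) (hFc : ∀ x, IsCompact (F x))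
    (hFlip : ∀ x y, Metric.hausdorffDist (F x) (F y) ≤ L * ‖x - y‖)
    (hFbd : ∀ x, ∀ f ∈ F x, ‖f‖ ≤ P)
    (hs : s0 < s1) (hN : 0 < N) (hv : v ∈ F b) (hvP : ‖v‖ ≤ P) :
    ∀ m, ∀ t ∈ Set.Icc s0 s1,
      Metric.infDist (eU hFne hFc s0 a v (dyadic s0 s1 N) m t)
          (F (eX hFne hFc s0 a v (dyadic s0 s1 N) m t))
        ≤ phi (L * (‖a - b‖ + P * (s1 - s0))) (L * P * (s1 - s0) / N) L m (t - s0) := by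
  intro m
  induction m with
  | zero =>
    intro t ht
    have e1 : eU hFne hFc s0 a v (dyadic s0 s1 N) 0 t = v := rfl
    rw [e1, phi_zero]
    have hfin := F_edist_ne_top hFne hFc b (eX hFne hFc s0 a v (dyadic s0 s1 N) 0 t)
    have hlip := eX_lip hFne hFc s0 a v (dyadic s0 s1 N) hvP hFbd 0 (le_refl s0) ht.1
    rw [eX_s0] at hlip
    have h2 : ‖b - eX hFne hFc s0 a v (dyadic s0 s1 N) 0 t‖ ≤ ‖a - b‖ + P * (s1 - s0) := by
      have heq : b - eX hFne hFc s0 a v (dyadic s0 s1 N) 0 t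
          = (b - a) - (eX hFne hFc s0 a v (dyadic s0 s1 N) 0 t - a) := by abel
      rw [heq]
      have := norm_sub_le (b - a) (eX hFne hFc s0 a v (dyadic s0 s1 N) 0 t - a)
      have h3 : ‖b - a‖ = ‖a - b‖ := norm_sub_rev b a
      have h4 : P * (t - s0) ≤ P * (s1 - s0) :=
        mul_le_mul_of_nonneg_left (by linarith [ht.2]) hP.le
      linarith
    calc Metric.infDist v (F (eX hFne hFc s0 a v (dyadic s0 s1 N) 0 t))
        ≤ Metric.infDist v (F b)
            + Metric.hausdorffDist (F b) (F (eX hFne hFc s0 a v (dyadic s0 s1 N) 0 t)) :=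
          Metric.infDist_le_infDist_add_hausdorffDist hfin
      _ = Metric.hausdorffDist (F b) (F (eX hFne hFc s0 a v (dyadic s0 s1 N) 0 t)) := by
          rw [Metric.infDist_zero_of_mem hv, zero_add]
      _ ≤ L * ‖b - eX hFne hFc s0 a v (dyadic s0 s1 N) 0 t‖ := hFlip _ _
      _ ≤ L * (‖a - b‖ + P * (s1 - s0)) := mul_le_mul_of_nonneg_left h2 hL.le
  | succ m IH =>
    intro t ht
    have ht0 : s0 ≤ t := ht.1
    set τ : ℝ := s0 + (⌊(t - s0) / dyadic s0 s1 N (m + 1)⌋₊ : ℝ) * dyadic s0 s1 N (m + 1)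
      with hτ
    have hτt : τ ≤ t := tau_le hs hN (m + 1) ht0
    have hτ0 : s0 ≤ τ := by
      have hpos := dyadic_pos hs hN (m + 1)
      have : (0:ℝ) ≤ (⌊(t - s0) / dyadic s0 s1 N (m + 1)⌋₊ : ℝ) * dyadic s0 s1 N (m + 1) := by
        positivity
      simp only [hτ]; linarith
    have hτ1 : τ ≤ s1 := hτt.trans ht.2
    have hmem : eU hFne hFc s0 a v (dyadic s0 s1 N) (m + 1) t
        ∈ F (eX hFne hFc s0 a v (dyadic s0 s1 N) m τ) := by
      rw [eU_succ hFne hFc hs hN m ht0, ← hτ]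
      exact sel_mem hFne hFc _ _
    have hfin := F_edist_ne_top hFne hFc (eX hFne hFc s0 a v (dyadic s0 s1 N) m τ)
      (eX hFne hFc s0 a v (dyadic s0 s1 N) (m + 1) t)
    have hd1 : ‖eX hFne hFc s0 a v (dyadic s0 s1 N) m t
        - eX hFne hFc s0 a v (dyadic s0 s1 N) m τ‖ ≤ P * (t - τ) :=
      eX_lip hFne hFc s0 a v (dyadic s0 s1 N) hvP hFbd m hτ0 hτt
    have hd1' : P * (t - τ) ≤ P * dyadic s0 s1 N (m + 1) :=
      mul_le_mul_of_nonneg_left (tau_close hs hN (m + 1) ht0) hP.le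
    have hd2 := step_xdiff hL hP hFne hFc hFbd hvP hs hN m IH t ht
    have htri : ‖eX hFne hFc s0 a v (dyadic s0 s1 N) m τ
        - eX hFne hFc s0 a v (dyadic s0 s1 N) (m + 1) t‖
        ≤ ‖eX hFne hFc s0 a v (dyadic s0 s1 N) m t
            - eX hFne hFc s0 a v (dyadic s0 s1 N) m τ‖
          + ‖eX hFne hFc s0 a v (dyadic s0 s1 N) (m + 1) t
            - eX hFne hFc s0 a v (dyadic s0 s1 N) m t‖ := by
      have heq : eX hFne hFc s0 a v (dyadic s0 s1 N) m τ
          - eX hFne hFc s0 a v (dyadic s0 s1 N) (m + 1) t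
          = -(eX hFne hFc s0 a v (dyadic s0 s1 N) m t
              - eX hFne hFc s0 a v (dyadic s0 s1 N) m τ)
            + -(eX hFne hFc s0 a v (dyadic s0 s1 N) (m + 1) t
              - eX hFne hFc s0 a v (dyadic s0 s1 N) m t) := by abel
      rw [heq]
      refine le_trans (norm_add_le _ _) ?_
      rw [norm_neg, norm_neg]
    have hBl : L * P * dyadic s0 s1 N (m + 1)
        = L * P * (s1 - s0) / N * (2⁻¹:ℝ) ^ (m + 1) := by
      unfold dyadic
      have hNne : (N:ℝ) ≠ 0 := Nat.cast_ne_zero.2 hN.ne'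
      rw [inv_pow]
      field_simp
    calc Metric.infDist (eU hFne hFc s0 a v (dyadic s0 s1 N) (m + 1) t)
          (F (eX hFne hFc s0 a v (dyadic s0 s1 N) (m + 1) t))
        ≤ Metric.hausdorffDist (F (eX hFne hFc s0 a v (dyadic s0 s1 N) m τ))
            (F (eX hFne hFc s0 a v (dyadic s0 s1 N) (m + 1) t)) :=
          Metric.infDist_le_hausdorffDist_of_mem hmem hfin
      _ ≤ L * ‖eX hFne hFc s0 a v (dyadic s0 s1 N) m τ
            - eX hFne hFc s0 a v (dyadic s0 s1 N) (m + 1) t‖ := hFlip _ _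
      _ ≤ L * (P * dyadic s0 s1 N (m + 1)
            + ∫ σ in (0:ℝ)..(t - s0),
                phi (L * (‖a - b‖ + P * (s1 - s0))) (L * P * (s1 - s0) / N) L m σ) := by
          refine mul_le_mul_of_nonneg_left ?_ hL.le
          refine le_trans htri ?_
          have := le_trans hd1 hd1'
          linarith [hd2, this]
      _ = phi (L * (‖a - b‖ + P * (s1 - s0))) (L * P * (s1 - s0) / N) L (m + 1) (t - s0) := by
          rw [phi_rec]
          rw [mul_add, ← mul_assoc, hBl]
  
end Invariant

section TrackingMain

variable {d : ℕ} {L P : ℝ} {F : (Fin d → ℝ) → Set (Fin d → ℝ)}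

theorem trackingSol_lt (hL : 0 < L) (hP : 0 < P)
    (hFne : ∀ x, (F x).Nonempty) (hFc : ∀ x, IsCompact (F x))
    (hFlip : ∀ x y, Metric.hausdorffDist (F x) (F y) ≤ L * ‖x - y‖)
    (hFbd : ∀ x, ∀ f ∈ F x, ‖f‖ ≤ P)
    {s0 s1 : ℝ} (hs : s0 < s1) (a : Fin d → ℝ) {b v : Fin d → ℝ} (hv : v ∈ F b)
    {err : ℝ} (herr : 0 < err) :
    ∃ x x' : ℝ → Fin d → ℝ, SolOn F x x' s0 s1 ∧ x s0 = a ∧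
      (∀ t ∈ Set.Icc s0 s1, x' t ∈ F (x t)) ∧
      ‖x s1 - (a + (s1 - s0) • v)‖
        ≤ (‖a - b‖ + P * (s1 - s0)) * (Real.exp (L * (s1 - s0)) - 1) + err := by
  have hvP : ‖v‖ ≤ P := hFbd b v hv
  have hh : (0:ℝ) < s1 - s0 := by linarith
  -- choose `N`
  obtain ⟨N0, hN0⟩ := exists_nat_ge (2 * P * (s1 - s0) * Real.exp (2 * L * (s1 - s0)) / err)
  set N : ℕ := N0 + 1 with hNdef
  have hN : 0 < N := Nat.succ_pos N0
  have hNR : (0:ℝ) < N := by exact_mod_cast hN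
  have hNge : 2 * P * (s1 - s0) * Real.exp (2 * L * (s1 - s0)) / err ≤ N := by
    have : (N0:ℝ) ≤ N := by exact_mod_cast Nat.le_succ N0
    linarith
  set A := L * (‖a - b‖ + P * (s1 - s0)) with hA
  set B := L * P * (s1 - s0) / N with hB
  have hA0 : 0 ≤ A := mul_nonneg hL.le (add_nonneg (norm_nonneg _) (by positivity))
  have hB0 : 0 ≤ B := by positivity
  have inv := defect_invariant (a := a) hL hP hFne hFc hFlip hFbd hs hN hv hvP
  -- the summable bound η
  set η : ℕ → ℝ := fun m => phi A B L m (s1 - s0) with hη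
  have hη0 : ∀ m, 0 ≤ η m := fun m => phi_nonneg hA0 hB0 hL.le m hh.le
  set ηb : ℕ → ℝ := fun m =>
    A * ((L * (s1 - s0)) ^ m / m.factorial)
      + (B * (2⁻¹:ℝ) ^ m) * Real.exp (2 * L * (s1 - s0)) with hηb
  have hηle : ∀ m, η m ≤ ηb m := by
    intro m
    have := phi_le hA0 hB0 hL.le hh.le m hh.le le_rfl
    simp only [hη, hηb]
    calc phi A B L m (s1 - s0) ≤ A * (L * (s1 - s0)) ^ m / m.factorial
          + B * (2⁻¹:ℝ) ^ m * Real.exp (2 * L * (s1 - s0)) := this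
      _ = A * ((L * (s1 - s0)) ^ m / m.factorial)
          + (B * (2⁻¹:ℝ) ^ m) * Real.exp (2 * L * (s1 - s0)) := by ring
  have hηbsum : Summable ηb := by
    refine Summable.add ((Real.summable_pow_div_factorial (L * (s1 - s0))).mul_left A) ?_
    exact ((summable_geometric_of_lt_one (by norm_num) (by norm_num)).mul_left B).mul_right _
  have hηsum : Summable η := Summable.of_nonneg_of_le hη0 hηle hηbsum
  -- difference of consecutive approximations
  have hudiff : ∀ m, ∀ t ∈ Set.Icc s0 s1,
      dist (eU hFne hFc s0 a v (dyadic s0 s1 N) m t)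
        (eU hFne hFc s0 a v (dyadic s0 s1 N) (m + 1) t) ≤ η m := by
    intro m t ht
    rw [dist_eq_norm, norm_sub_rev]
    refine le_trans (step_udiff hL hP hFne hFc hs hN m (inv m) t ht) ?_
    exact phi_mono hA0 hB0 hL.le m (by linarith [ht.1]) (by linarith [ht.2])
  -- the limit derivative
  set ct : ℝ → ℝ := fun t => max s0 (min t s1) with hct
  have hctmem : ∀ t, ct t ∈ Set.Icc s0 s1 :=
    fun t => ⟨le_max_left _ _, max_le hs.le (min_le_right _ _)⟩
  have hcteq : ∀ t ∈ Set.Icc s0 s1, ct t = t := by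
    intro t ht
    simp only [hct]
    rw [min_eq_left ht.2, max_eq_right ht.1]
  have hcauchy : ∀ t, CauchySeq (fun m => eU hFne hFc s0 a v (dyadic s0 s1 N) m (ct t)) :=
    fun t => cauchySeq_of_dist_le_of_summable η (fun m => hudiff m _ (hctmem t)) hηsum
  set y' : ℝ → Fin d → ℝ :=
    fun t => Filter.limUnder Filter.atTop (fun m => eU hFne hFc s0 a v (dyadic s0 s1 N) m (ct t))
    with hy'
  have htendct : ∀ t, Filter.Tendsto (fun m => eU hFne hFc s0 a v (dyadic s0 s1 N) m (ct t))
      Filter.atTop (nhds (y' t)) := fun t => (hcauchy t).tendsto_limUnder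
  have htend : ∀ t ∈ Set.Icc s0 s1,
      Filter.Tendsto (fun m => eU hFne hFc s0 a v (dyadic s0 s1 N) m t)
        Filter.atTop (nhds (y' t)) := by
    intro t ht
    have := htendct t
    rwa [hcteq t ht] at this
  have hctcont : Continuous ct := continuous_const.max (continuous_id.min continuous_const)
  have hy'meas : Measurable y' := by
    refine measurable_of_tendsto_metrizable'
      (f := fun m t => eU hFne hFc s0 a v (dyadic s0 s1 N) m (ct t)) Filter.atTop
      (fun m => (eU_measurable hFne hFc s0 a v (dyadic s0 s1 N) m).comp hctcont.measurable) ?_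
    rw [tendsto_pi_nhds]
    exact fun t => htendct t
  have hy'bd : ∀ t, ‖y' t‖ ≤ P := by
    intro t
    refine le_of_tendsto' (htendct t).norm fun m => ?_
    exact eU_norm_le hFne hFc s0 a v (dyadic s0 s1 N) hvP hFbd m _
  -- tails
  set tail : ℕ → ℝ := fun m => ∑' r, η (m + r) with htaildef
  have htail : ∀ m, ∀ t ∈ Set.Icc s0 s1,
      dist (eU hFne hFc s0 a v (dyadic s0 s1 N) m t) (y' t) ≤ tail m := by
    intro m t ht
    exact dist_le_tsum_of_dist_le_of_tendsto η (fun k => hudiff k t ht) hηsum (htend t ht) m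
  have htail0 : Filter.Tendsto tail Filter.atTop (nhds 0) := by
    have h1 : ∀ m, tail m = (∑' r, η r) - ∑ r ∈ Finset.range m, η r := by
      intro m
      have := Summable.sum_add_tsum_nat_add (f := η) m hηsum
      simp only [htaildef]
      have heq : (fun r => η (m + r)) = fun r => η (r + m) := by
        funext r; rw [Nat.add_comm]
      rw [heq]
      linarith [this]
    have h2 : Filter.Tendsto (fun m => (∑' r, η r) - ∑ r ∈ Finset.range m, η r)
        Filter.atTop (nhds ((∑' r, η r) - (∑' r, η r))) :=
      Filter.Tendsto.sub tendsto_const_nhds hηsum.hasSum.tendsto_sum_nat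
    rw [sub_self] at h2
    exact (funext h1 : tail = _) ▸ h2
  have htailnn : ∀ m, 0 ≤ tail m := fun m => tsum_nonneg fun r => hη0 _
  -- the limit solution
  set y : ℝ → Fin d → ℝ := fun t => a + ∫ s in Set.Ioc s0 t, y' s with hy
  have hy'int : ∀ s : Set ℝ, volume s ≠ ⊤ → IntegrableOn y' s volume :=
    fun s hsfin => integrableOn_of_bdd hy'meas hy'bd hsfin
  have hyX : ∀ m, ∀ t ∈ Set.Icc s0 s1,
      ‖y t - eX hFne hFc s0 a v (dyadic s0 s1 N) m t‖ ≤ tail m * (s1 - s0) := by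
    intro m t ht
    have hsub : y t - eX hFne hFc s0 a v (dyadic s0 s1 N) m t
        = ∫ s in Set.Ioc s0 t, (y' s - eU hFne hFc s0 a v (dyadic s0 s1 N) m s) := by
      simp only [hy]
      unfold eX
      rw [add_sub_add_left_eq_sub, ← integral_sub (hy'int _ (by simp))
        (eU_integrableOn hFne hFc s0 a v (dyadic s0 s1 N) hvP hFbd m (by simp))]
    rw [hsub]
    have hb : ∀ s ∈ Set.Ioc s0 t,
        ‖y' s - eU hFne hFc s0 a v (dyadic s0 s1 N) m s‖ ≤ tail m := by
      intro s hsm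
      have hs' : s ∈ Set.Icc s0 s1 := ⟨hsm.1.le, hsm.2.trans ht.2⟩
      rw [← dist_eq_norm, dist_comm]
      exact htail m s hs'
    calc ‖∫ s in Set.Ioc s0 t, (y' s - eU hFne hFc s0 a v (dyadic s0 s1 N) m s)‖
        ≤ tail m * (volume (Set.Ioc s0 t)).toReal :=
          norm_setIntegral_le_of_norm_le_const (μ := volume) (by simp) hb
      _ ≤ tail m * (s1 - s0) := by
          rw [Real.volume_Ioc, ENNReal.toReal_ofReal (by linarith [ht.1])]
          exact mul_le_mul_of_nonneg_left (by linarith [ht.2]) (htailnn m)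
  have hXtend : ∀ t ∈ Set.Icc s0 s1,
      Filter.Tendsto (fun m => eX hFne hFc s0 a v (dyadic s0 s1 N) m t)
        Filter.atTop (nhds (y t)) := by
    intro t ht
    rw [tendsto_iff_dist_tendsto_zero]
    refine squeeze_zero (fun m => dist_nonneg) (fun m => ?_)
      (by simpa using htail0.mul_const (s1 - s0))
    rw [dist_eq_norm, norm_sub_rev]
    exact hyX m t ht
  -- membership of the limit
  have hmem : ∀ t ∈ Set.Icc s0 s1, y' t ∈ F (y t) := by
    intro t ht
    have hbound : ∀ m, Metric.infDist (y' t) (F (y t))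
        ≤ tail m + (η m + L * (tail m * (s1 - s0))) := by
      intro m
      have h1 : Metric.infDist (y' t) (F (y t))
          ≤ Metric.infDist (eU hFne hFc s0 a v (dyadic s0 s1 N) m t) (F (y t))
            + dist (y' t) (eU hFne hFc s0 a v (dyadic s0 s1 N) m t) :=
        Metric.infDist_le_infDist_add_dist
      have h2 : Metric.infDist (eU hFne hFc s0 a v (dyadic s0 s1 N) m t) (F (y t))
          ≤ Metric.infDist (eU hFne hFc s0 a v (dyadic s0 s1 N) m t)
              (F (eX hFne hFc s0 a v (dyadic s0 s1 N) m t))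
            + Metric.hausdorffDist (F (eX hFne hFc s0 a v (dyadic s0 s1 N) m t)) (F (y t)) :=
        Metric.infDist_le_infDist_add_hausdorffDist (F_edist_ne_top hFne hFc _ _)
      have h3 : Metric.infDist (eU hFne hFc s0 a v (dyadic s0 s1 N) m t)
          (F (eX hFne hFc s0 a v (dyadic s0 s1 N) m t)) ≤ η m := by
        refine le_trans (inv m t ht) ?_
        exact phi_mono hA0 hB0 hL.le m (by linarith [ht.1]) (by linarith [ht.2])
      have h4 : Metric.hausdorffDist (F (eX hFne hFc s0 a v (dyadic s0 s1 N) m t)) (F (y t))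
          ≤ L * ‖eX hFne hFc s0 a v (dyadic s0 s1 N) m t - y t‖ := hFlip _ _
      have h5 : ‖eX hFne hFc s0 a v (dyadic s0 s1 N) m t - y t‖ ≤ tail m * (s1 - s0) := by
        rw [norm_sub_rev]; exact hyX m t ht
      have h6 : dist (y' t) (eU hFne hFc s0 a v (dyadic s0 s1 N) m t) ≤ tail m := by
        rw [dist_comm]; exact htail m t ht
      have h7 : L * ‖eX hFne hFc s0 a v (dyadic s0 s1 N) m t - y t‖
          ≤ L * (tail m * (s1 - s0)) := mul_le_mul_of_nonneg_left h5 hL.le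
      linarith
    have hlim : Filter.Tendsto (fun m => tail m + (η m + L * (tail m * (s1 - s0))))
        Filter.atTop (nhds 0) := by
      have l1 : Filter.Tendsto η Filter.atTop (nhds 0) := hηsum.tendsto_atTop_zero
      have l2 := (htail0.mul_const (s1 - s0)).const_mul L
      have l3 := l1.add l2
      have l4 := htail0.add l3
      simpa using l4
    have hle0 : Metric.infDist (y' t) (F (y t)) ≤ 0 :=
      ge_of_tendsto hlim (Filter.Eventually.of_forall hbound)
    have h0 : Metric.infDist (y' t) (F (y t)) = 0 :=
      le_antisymm hle0 Metric.infDist_nonneg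
    exact ((hFc (y t)).isClosed.mem_iff_infDist_zero (hFne (y t))).2 h0
  -- the quantitative tracking bound
  have hX0 : ∀ t, s0 ≤ t →
      eX hFne hFc s0 a v (dyadic s0 s1 N) 0 t = a + (t - s0) • v := by
    intro t ht
    unfold eX
    have : ∀ s : ℝ, eU hFne hFc s0 a v (dyadic s0 s1 N) 0 s = v := fun s => rfl
    simp only [this]
    rw [setIntegral_const, Real.volume_real_Ioc_of_le (by linarith)]
  set ITG : ℕ → ℝ := fun r => ∫ σ in (0:ℝ)..(s1 - s0), phi A B L r σ with hITG
  have hITGle : ∀ r, L * ITG r ≤ phi A B L (r + 1) (s1 - s0) := by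
    intro r
    have := phi_rec A B L r (s1 - s0)
    have h2 : 0 ≤ B * (2⁻¹:ℝ) ^ (r + 1) := by positivity
    simp only [hITG]
    linarith
  have hXdiffs : ∀ m, ∀ t ∈ Set.Icc s0 s1,
      ‖eX hFne hFc s0 a v (dyadic s0 s1 N) m t - eX hFne hFc s0 a v (dyadic s0 s1 N) 0 t‖
        ≤ ∑ r ∈ Finset.range m, ITG r := by
    intro m
    induction m with
    | zero => intro t ht; simp
    | succ m IHm =>
      intro t ht
      have hstep := step_xdiff hL hP hFne hFc hFbd hvP hs hN m (inv m) t ht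
      have hmono : ∫ σ in (0:ℝ)..(t - s0), phi A B L m σ ≤ ITG m := by
        refine intervalIntegral.integral_mono_interval (le_refl (0:ℝ)) (by linarith [ht.1])
          (by linarith [ht.2]) ?_ (phi_intervalIntegrable A B L m 0 (s1 - s0))
        filter_upwards [ae_restrict_mem measurableSet_Ioc] with σ hσ
        exact phi_nonneg hA0 hB0 hL.le m hσ.1.le
      have htri : ‖eX hFne hFc s0 a v (dyadic s0 s1 N) (m + 1) t
            - eX hFne hFc s0 a v (dyadic s0 s1 N) 0 t‖
          ≤ ‖eX hFne hFc s0 a v (dyadic s0 s1 N) (m + 1) t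
              - eX hFne hFc s0 a v (dyadic s0 s1 N) m t‖
            + ‖eX hFne hFc s0 a v (dyadic s0 s1 N) m t
              - eX hFne hFc s0 a v (dyadic s0 s1 N) 0 t‖ := by
        have heq : eX hFne hFc s0 a v (dyadic s0 s1 N) (m + 1) t
            - eX hFne hFc s0 a v (dyadic s0 s1 N) 0 t
            = (eX hFne hFc s0 a v (dyadic s0 s1 N) (m + 1) t
                - eX hFne hFc s0 a v (dyadic s0 s1 N) m t)
              + (eX hFne hFc s0 a v (dyadic s0 s1 N) m t
                - eX hFne hFc s0 a v (dyadic s0 s1 N) 0 t) := by abel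
        rw [heq]; exact norm_add_le _ _
      rw [Finset.sum_range_succ]
      have := IHm t ht
      linarith [le_trans hstep hmono]
  -- partial sums of ITG are bounded by the target
  have hITGsum : ∀ m, ∑ r ∈ Finset.range m, ITG r
      ≤ (A * (Real.exp (L * (s1 - s0)) - 1)
          + 2 * B * Real.exp (2 * L * (s1 - s0))) / L := by
    intro m
    have h1 : ∀ r ∈ Finset.range m, L * ITG r
        ≤ A * ((L * (s1 - s0)) ^ (r+1) / (r+1).factorial)
          + (B * (2⁻¹:ℝ) ^ (r+1)) * Real.exp (2 * L * (s1 - s0)) := by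
      intro r _
      refine le_trans (hITGle r) (le_trans (phi_le hA0 hB0 hL.le hh.le (r+1) hh.le le_rfl) ?_)
      exact le_of_eq (by ring)
    have h2 : L * ∑ r ∈ Finset.range m, ITG r
        ≤ A * (∑ r ∈ Finset.range m, (L * (s1 - s0)) ^ (r+1) / (r+1).factorial)
          + (∑ r ∈ Finset.range m, (2⁻¹:ℝ) ^ (r+1)) * (B * Real.exp (2 * L * (s1 - s0))) := by
      rw [Finset.mul_sum]
      calc ∑ r ∈ Finset.range m, L * ITG r
          ≤ ∑ r ∈ Finset.range m, (A * ((L * (s1 - s0)) ^ (r+1) / (r+1).factorial)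
            + (B * (2⁻¹:ℝ) ^ (r+1)) * Real.exp (2 * L * (s1 - s0))) := Finset.sum_le_sum h1
        _ = A * (∑ r ∈ Finset.range m, (L * (s1 - s0)) ^ (r+1) / (r+1).factorial)
            + (∑ r ∈ Finset.range m, (2⁻¹:ℝ) ^ (r+1)) * (B * Real.exp (2 * L * (s1 - s0))) := by
            rw [Finset.sum_add_distrib, Finset.mul_sum, Finset.sum_mul]
            congr 1
            exact Finset.sum_congr rfl fun r _ => by ring
    have h3 : ∑ r ∈ Finset.range m, (L * (s1 - s0)) ^ (r+1) / (r+1).factorial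
        ≤ Real.exp (L * (s1 - s0)) - 1 := by
      have h4 := Real.sum_le_exp_of_nonneg (by positivity : (0:ℝ) ≤ L * (s1 - s0)) (m + 1)
      have h5 : ∑ j ∈ Finset.range (m + 1), (L * (s1 - s0)) ^ j / j.factorial
          = (∑ r ∈ Finset.range m, (L * (s1 - s0)) ^ (r+1) / (r+1).factorial) + 1 := by
        rw [Finset.sum_range_succ']
        simp
      linarith
    have h6 : ∑ r ∈ Finset.range m, (2⁻¹:ℝ) ^ (r+1) ≤ 2 := by
      have h7 : ∀ r ∈ Finset.range m, (2⁻¹:ℝ) ^ (r+1) ≤ (2⁻¹:ℝ) ^ r := by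
        intro r _
        refine pow_le_pow_of_le_one (by norm_num) (by norm_num) (Nat.le_succ r)
      refine le_trans (Finset.sum_le_sum h7) ?_
      have h8 : ∑ r ∈ Finset.range m, (2⁻¹:ℝ) ^ r ≤ ∑' r : ℕ, (2⁻¹:ℝ) ^ r :=
        Summable.sum_le_tsum _ (fun r _ => by positivity)
          (summable_geometric_of_lt_one (by norm_num) (by norm_num))
      have h9 : ∑' r : ℕ, (2⁻¹:ℝ) ^ r = 2 := by
        have := tsum_geometric_two
        simpa [one_div] using this
      linarith
    have hBe : 0 ≤ B * Real.exp (2 * L * (s1 - s0)) := by positivity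
    have h10 : L * ∑ r ∈ Finset.range m, ITG r
        ≤ A * (Real.exp (L * (s1 - s0)) - 1) + 2 * B * Real.exp (2 * L * (s1 - s0)) := by
      have hexpm1 : (0:ℝ) ≤ Real.exp (L * (s1 - s0)) - 1 := by
        have := Real.add_one_le_exp (L * (s1 - s0))
        have h0 : (0:ℝ) ≤ L * (s1 - s0) := by positivity
        linarith
      have e1 : A * (∑ r ∈ Finset.range m, (L * (s1 - s0)) ^ (r+1) / (r+1).factorial)
          ≤ A * (Real.exp (L * (s1 - s0)) - 1) := mul_le_mul_of_nonneg_left h3 hA0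
      have e2 : (∑ r ∈ Finset.range m, (2⁻¹:ℝ) ^ (r+1)) * (B * Real.exp (2 * L * (s1 - s0)))
          ≤ 2 * (B * Real.exp (2 * L * (s1 - s0))) := mul_le_mul_of_nonneg_right h6 hBe
      calc L * ∑ r ∈ Finset.range m, ITG r ≤ _ := h2
        _ ≤ A * (Real.exp (L * (s1 - s0)) - 1) + 2 * (B * Real.exp (2 * L * (s1 - s0))) := by
            linarith
        _ = A * (Real.exp (L * (s1 - s0)) - 1) + 2 * B * Real.exp (2 * L * (s1 - s0)) := by ring
    rw [le_div_iff₀ hL]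
    linarith [h10]
  -- pass to the limit in the tracking bound at `t = s1`
  have hs1mem : s1 ∈ Set.Icc s0 s1 := ⟨hs.le, le_rfl⟩
  have htrack : ‖y s1 - (a + (s1 - s0) • v)‖
      ≤ (A * (Real.exp (L * (s1 - s0)) - 1) + 2 * B * Real.exp (2 * L * (s1 - s0))) / L := by
    have hXv : eX hFne hFc s0 a v (dyadic s0 s1 N) 0 s1 = a + (s1 - s0) • v := hX0 s1 hs.le
    have hl : Filter.Tendsto
        (fun m => ‖eX hFne hFc s0 a v (dyadic s0 s1 N) m s1 - (a + (s1 - s0) • v)‖)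
        Filter.atTop (nhds ‖y s1 - (a + (s1 - s0) • v)‖) :=
      ((hXtend s1 hs1mem).sub tendsto_const_nhds).norm
    refine le_of_tendsto hl (Filter.Eventually.of_forall fun m => ?_)
    have := hXdiffs m s1 hs1mem
    rw [hXv] at this
    exact le_trans this (hITGsum m)
  -- final numeric bound
  have hfinal : (A * (Real.exp (L * (s1 - s0)) - 1) + 2 * B * Real.exp (2 * L * (s1 - s0))) / L
      ≤ (‖a - b‖ + P * (s1 - s0)) * (Real.exp (L * (s1 - s0)) - 1) + err := by
    have hexpm1 : (0:ℝ) ≤ Real.exp (L * (s1 - s0)) - 1 := by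
      have := Real.add_one_le_exp (L * (s1 - s0))
      have h0 : (0:ℝ) ≤ L * (s1 - s0) := by positivity
      linarith
    have e1 : A * (Real.exp (L * (s1 - s0)) - 1) / L
        = (‖a - b‖ + P * (s1 - s0)) * (Real.exp (L * (s1 - s0)) - 1) := by
      rw [hA]; field_simp
    have e2 : 2 * B * Real.exp (2 * L * (s1 - s0)) / L
        = 2 * P * (s1 - s0) * Real.exp (2 * L * (s1 - s0)) / N := by
      rw [hB]; field_simp
    have e3 : 2 * P * (s1 - s0) * Real.exp (2 * L * (s1 - s0)) / N ≤ err := by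
      rw [div_le_iff₀ hNR]
      have := (div_le_iff₀ herr).1 hNge
      linarith
    have : (A * (Real.exp (L * (s1 - s0)) - 1) + 2 * B * Real.exp (2 * L * (s1 - s0))) / L
        = A * (Real.exp (L * (s1 - s0)) - 1) / L
          + 2 * B * Real.exp (2 * L * (s1 - s0)) / L := by ring
    rw [this, e1, e2]
    linarith
  -- package the solution
  refine ⟨y, y', ⟨?_, ?_, ?_⟩, ?_, hmem, le_trans htrack hfinal⟩
  · exact hy'int _ (by simp)
  · intro t ht
    have hys0 : y s0 = a := by simp only [hy]; simp [Set.Ioc_self]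
    rw [hys0]
  · filter_upwards [ae_restrict_mem measurableSet_Ioc] with s hsm
    exact hmem s ⟨hsm.1.le, hsm.2⟩
  · simp only [hy]; simp [Set.Ioc_self]

end TrackingMain

section Wrapper

variable {d : ℕ} {L P : ℝ} {F : (Fin d → ℝ) → Set (Fin d → ℝ)}

theorem trackingSol (hL : 0 < L) (hP : 0 < P)
    (hFne : ∀ x, (F x).Nonempty) (hFc : ∀ x, IsCompact (F x))
    (hFlip : ∀ x y, Metric.hausdorffDist (F x) (F y) ≤ L * ‖x - y‖)
    (hFbd : ∀ x, ∀ f ∈ F x, ‖f‖ ≤ P)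
    {s0 s1 : ℝ} (hs : s0 ≤ s1) (a : Fin d → ℝ) {b v : Fin d → ℝ} (hv : v ∈ F b)
    {err : ℝ} (herr : 0 < err) :
    ∃ x x' : ℝ → Fin d → ℝ, SolOn F x x' s0 s1 ∧ x s0 = a ∧
      ‖x s1 - (a + (s1 - s0) • v)‖
        ≤ (‖a - b‖ + P * (s1 - s0)) * (Real.exp (L * (s1 - s0)) - 1) + err := by
  rcases eq_or_lt_of_le hs with heq | hlt
  · subst heq
    refine ⟨fun _ => a, fun _ => v, ⟨?_, ?_, ?_⟩, rfl, ?_⟩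
    · rw [Set.Icc_self]; exact integrableOn_null'
    · intro t ht
      rw [Set.mem_Icc] at ht
      have : t = s0 := le_antisymm ht.2 ht.1
      subst this
      simp [Set.Ioc_self]
    · rw [Set.Ioc_self]
      simp
    · have h1 : ‖a - (a + (s0 - s0) • v)‖ = 0 := by simp
      rw [h1]
      have h2 : (‖a - b‖ + P * (s0 - s0)) * (Real.exp (L * (s0 - s0)) - 1) = 0 := by
        simp
      rw [h2]
      linarith
  · obtain ⟨x, x', hsol, hx0, _, hest⟩ :=
      trackingSol_lt hL hP hFne hFc hFlip hFbd hlt a hv herr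
    exact ⟨x, x', hsol, hx0, hest⟩

/-- A `SolOn` on `[0,T]` starting in `X0` is an `IsSolution`. -/
lemma SolOn.isSolution {X0 : Set (Fin d → ℝ)} {T : ℝ} {x x' : ℝ → Fin d → ℝ}
    (hsol : SolOn F x x' 0 T) (hx0 : x 0 ∈ X0) : IsSolution d F X0 T x := by
  obtain ⟨hint, heq, hmem⟩ := hsol
  exact ⟨hx0, x', hint, heq, ae_restrict_of_ae_restrict_of_subset Set.Ioo_subset_Ioc_self hmem⟩

end Wrapper

/-! ### The error bound recursion -/

def epsB (L P : ℝ) (h ρ t : ℕ → ℝ) (k : ℕ) : ℝ :=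
  Real.exp (L * t k) * ρ 0 / 2 +
    ∑ j ∈ Finset.Icc 1 k, Real.exp (L * (t k - t j)) * (Real.exp (L * h j) - 1) *
      (P * h j + ρ j / 2 + ρ j / (2 * L * h j))

lemma epsB_zero {L P : ℝ} {h ρ t : ℕ → ℝ} (ht0 : t 0 = 0) :
    epsB L P h ρ t 0 = ρ 0 / 2 := by
  simp [epsB, ht0]

lemma epsB_succ {L P : ℝ} {h ρ t : ℕ → ℝ} {k : ℕ}
    (hk1 : t (k + 1) = t k + h (k + 1)) :
    epsB L P h ρ t (k + 1)
      = Real.exp (L * h (k + 1)) * epsB L P h ρ t k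
        + (Real.exp (L * h (k + 1)) - 1)
          * (P * h (k + 1) + ρ (k + 1) / 2 + ρ (k + 1) / (2 * L * h (k + 1))) := by
  unfold epsB
  rw [Finset.sum_Icc_succ_top (Nat.succ_le_succ (Nat.zero_le k))]
  have e1 : Real.exp (L * t (k + 1)) = Real.exp (L * h (k + 1)) * Real.exp (L * t k) := by
    rw [hk1, ← Real.exp_add]
    ring_nf
  have e2 : ∀ j ∈ Finset.Icc 1 k,
      Real.exp (L * (t (k + 1) - t j)) * (Real.exp (L * h j) - 1)
          * (P * h j + ρ j / 2 + ρ j / (2 * L * h j))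
        = Real.exp (L * h (k + 1))
          * (Real.exp (L * (t k - t j)) * (Real.exp (L * h j) - 1)
            * (P * h j + ρ j / 2 + ρ j / (2 * L * h j))) := by
    intro j _
    have : Real.exp (L * (t (k + 1) - t j))
        = Real.exp (L * h (k + 1)) * Real.exp (L * (t k - t j)) := by
      rw [hk1, ← Real.exp_add]
      ring_nf
    rw [this]
    ring
  rw [Finset.sum_congr rfl e2, sub_self, mul_zero, Real.exp_zero, one_mul, e1,
    ← Finset.mul_sum]
  ring

lemma epsB_nonneg {L P : ℝ} {h ρ t : ℕ → ℝ} {k : ℕ} (hL : 0 < L) (hP : 0 < P)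
    (hρ0 : 0 < ρ 0) (hh : ∀ j, 1 ≤ j → j ≤ k → 0 < h j) (hρ : ∀ j, j ≤ k → 0 < ρ j) :
    0 ≤ epsB L P h ρ t k := by
  unfold epsB
  have h1 : (0:ℝ) ≤ Real.exp (L * t k) * ρ 0 / 2 := by positivity
  have h2 : (0:ℝ) ≤ ∑ j ∈ Finset.Icc 1 k, Real.exp (L * (t k - t j)) * (Real.exp (L * h j) - 1) *
      (P * h j + ρ j / 2 + ρ j / (2 * L * h j)) := by
    refine Finset.sum_nonneg fun j hj => ?_
    rw [Finset.mem_Icc] at hj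
    have hhj := hh j hj.1 hj.2
    have hρj := hρ j hj.2
    have hem1 : (0:ℝ) ≤ Real.exp (L * h j) - 1 := by
      have := Real.add_one_le_exp (L * h j)
      have h0 : (0:ℝ) ≤ L * h j := by positivity
      linarith
    have h3 : (0:ℝ) ≤ P * h j + ρ j / 2 + ρ j / (2 * L * h j) := by positivity
    positivity
  linarith

/-- the key one-step inequality. -/
lemma step_ineq {L P u ρ' ε C : ℝ} (hL : 0 < L) (hP : 0 < P) (hu : 0 < u) (hρ' : 0 < ρ')
    (hε : 0 ≤ ε) (hC : C ≤ ε * (1 + L * u) + L * P * u ^ 2 + ρ' / 2) :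
    C ≤ Real.exp (L * u) * ε + (Real.exp (L * u) - 1) * (P * u + ρ' / 2 + ρ' / (2 * L * u)) := by
  have hLu : 0 < L * u := by positivity
  have h1 : L * u + 1 ≤ Real.exp (L * u) := Real.add_one_le_exp _
  have hem1 : 0 ≤ Real.exp (L * u) - 1 := by linarith
  -- ε (1 + Lu) ≤ e^{Lu} ε
  have e1 : ε * (1 + L * u) ≤ Real.exp (L * u) * ε := by
    nlinarith [mul_le_mul_of_nonneg_left h1 hε]
  -- L P u² ≤ (e^{Lu} - 1) P u
  have e2 : L * P * u ^ 2 ≤ (Real.exp (L * u) - 1) * (P * u) := by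
    have h2 := mul_le_mul_of_nonneg_right (show L * u ≤ Real.exp (L * u) - 1 by linarith)
      (show (0:ℝ) ≤ P * u by positivity)
    nlinarith [h2]
  -- ρ'/2 ≤ (e^{Lu}-1) ρ'/(2Lu)
  have e3 : ρ' / 2 ≤ (Real.exp (L * u) - 1) * (ρ' / (2 * (L * u))) := half_le_exp_term hLu hρ'
  have e3' : (Real.exp (L * u) - 1) * (ρ' / (2 * (L * u)))
      = (Real.exp (L * u) - 1) * (ρ' / (2 * L * u)) := by
    rw [mul_assoc]
  have e4 : (0:ℝ) ≤ (Real.exp (L * u) - 1) * (ρ' / 2) := by positivity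
  have e3'' := e3' ▸ e3
  have rhs_eq : (Real.exp (L * u) - 1) * (P * u + ρ' / 2 + ρ' / (2 * L * u))
      = (Real.exp (L * u) - 1) * (P * u) + (Real.exp (L * u) - 1) * (ρ' / 2)
        + (Real.exp (L * u) - 1) * (ρ' / (2 * L * u)) := by ring
  linarith [e3'', e4, e1, e2, rhs_eq.le, rhs_eq.ge]

/-! ### Direction (a): exact solutions are close to the discrete reachable sets -/

lemma discReach_zero {d : ℕ} {F : (Fin d → ℝ) → Set (Fin d → ℝ)} {X0 : Set (Fin d → ℝ)}
    {h ρ : ℕ → ℝ} : discReach d F X0 h ρ 0 = proj d (ρ 0) X0 := rfl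

lemma discReach_succ {d : ℕ} {F : (Fin d → ℝ) → Set (Fin d → ℝ)} {X0 : Set (Fin d → ℝ)}
    {h ρ : ℕ → ℝ} {k : ℕ} : discReach d F X0 h ρ (k + 1)
      = ⋃ y ∈ discReach d F X0 h ρ k,
          proj d (ρ (k + 1)) ((fun f => y + h (k + 1) • f) '' F y) := rfl

lemma dirA (d : ℕ) (T L P : ℝ) (hT : 0 < T) (hL : 0 < L) (hP : 0 < P)
    (X0 : Set (Fin d → ℝ))
    (F : (Fin d → ℝ) → Set (Fin d → ℝ))
    (hFne : ∀ x, (F x).Nonempty) (hFc : ∀ x, IsCompact (F x))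
    (hFconv : ∀ x, Convex ℝ (F x))
    (hFlip : ∀ x y, Metric.hausdorffDist (F x) (F y) ≤ L * ‖x - y‖)
    (hFbd : ∀ x, ∀ f ∈ F x, ‖f‖ ≤ P)
    (n : ℕ) (h ρ t : ℕ → ℝ)
    (hh : ∀ j, 1 ≤ j → j ≤ n → 0 < h j)
    (hsum : ∑ j ∈ Finset.Icc 1 n, h j = T)
    (hρ : ∀ j, j ≤ n → 0 < ρ j)
    (ht : ∀ k, k ≤ n → t k = ∑ j ∈ Finset.Icc 1 k, h j) :
    ∀ k, k ≤ n → ∀ x : ℝ → Fin d → ℝ, IsSolution d F X0 T x →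
      ∃ z ∈ discReach d F X0 h ρ k, dist (x (t k)) z ≤ epsB L P h ρ t k := by
  have ht0 : t 0 = 0 := by rw [ht 0 (Nat.zero_le n)]; simp
  have tnonneg : ∀ k, k ≤ n → 0 ≤ t k := by
    intro k hk
    rw [ht k hk]
    refine Finset.sum_nonneg fun j hj => ?_
    rw [Finset.mem_Icc] at hj
    exact (hh j hj.1 (hj.2.trans hk)).le
  have tleT : ∀ k, k ≤ n → t k ≤ T := by
    intro k hk
    rw [ht k hk, ← hsum]
    refine Finset.sum_le_sum_of_subset_of_nonneg (Finset.Icc_subset_Icc_right hk) ?_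
    intro j hj _
    rw [Finset.mem_Icc] at hj
    exact (hh j hj.1 hj.2).le
  have tsucc : ∀ k, k + 1 ≤ n → t (k + 1) = t k + h (k + 1) := by
    intro k hk1
    rw [ht (k + 1) hk1, ht k (Nat.le_of_succ_le hk1),
      Finset.sum_Icc_succ_top (Nat.succ_le_succ (Nat.zero_le k))]
  intro k
  induction k with
  | zero =>
    intro hk x hx
    obtain ⟨g, hgmem, hgx⟩ := exists_proj_close hx.1 (hρ 0 (Nat.zero_le n))
    refine ⟨g, hgmem, ?_⟩
    rw [ht0, epsB_zero ht0, dist_eq_norm, norm_sub_rev]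
    exact hgx
  | succ k IH =>
    intro hk1 x hx
    have hk : k ≤ n := Nat.le_of_succ_le hk1
    obtain ⟨z, hz, hdz⟩ := IH hk x hx
    obtain ⟨hx0, x', hxint, hxeq, hxmem⟩ := hx
    have hh' : 0 < h (k + 1) := hh (k + 1) (Nat.succ_le_succ (Nat.zero_le k)) hk1
    have htk0 : 0 ≤ t k := tnonneg k hk
    have ht1T : t (k + 1) ≤ T := tleT (k + 1) hk1
    have hts : t (k + 1) = t k + h (k + 1) := tsucc k hk1
    have htlt : t k < t (k + 1) := by rw [hts]; linarith
    have htkT : t k ≤ T := tleT k hk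
    have hIocsub : ∀ {s : ℝ}, s ≤ t (k + 1) → Set.Ioc (t k) s ⊆ Set.Icc 0 T := by
      intro s hs u hu
      exact ⟨htk0.trans hu.1.le, (hu.2.trans hs).trans ht1T⟩
    have hIoc0sub : ∀ {s : ℝ}, s ≤ T → Set.Ioc (0:ℝ) s ⊆ Set.Icc 0 T := by
      intro s hs u hu
      exact ⟨hu.1.le, hu.2.trans hs⟩
    -- increments of x are integrals of x'
    have hincr : ∀ s, t k ≤ s → s ≤ t (k + 1) →
        x s - x (t k) = ∫ u in Set.Ioc (t k) s, x' u := by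
      intro s hs1 hs2
      have hsT : s ≤ T := hs2.trans ht1T
      rw [hxeq s ⟨htk0.trans hs1, hsT⟩, hxeq (t k) ⟨htk0, htkT⟩]
      have hsplit : Set.Ioc (0:ℝ) s = Set.Ioc 0 (t k) ∪ Set.Ioc (t k) s :=
        (Set.Ioc_union_Ioc_eq_Ioc htk0 hs1).symm
      rw [hsplit, setIntegral_union (Set.Ioc_disjoint_Ioc_of_le le_rfl) measurableSet_Ioc
        (hxint.mono_set (hIoc0sub htkT)) (hxint.mono_set (hIocsub hs2))]
      abel
    -- a.e. properties on the step interval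
    have hmem' : ∀ᵐ s ∂(volume.restrict (Set.Ioc (t k) (t (k + 1)))), x' s ∈ F (x s) := by
      have h1 : ∀ᵐ s ∂(volume : Measure ℝ), s ∈ Set.Ioo 0 T → x' s ∈ F (x s) :=
        (ae_restrict_iff' measurableSet_Ioo).1 hxmem
      have hTne : ∀ᵐ s : ℝ ∂volume, s ≠ T := by
        rw [ae_iff]
        have he : {s : ℝ | ¬s ≠ T} = {T} := by ext u; simp
        rw [he]
        exact Real.volume_singleton
      refine (ae_restrict_iff' measurableSet_Ioc).2 ?_
      filter_upwards [h1, hTne] with s h1s hTs hs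
      exact h1s ⟨lt_of_le_of_lt htk0 hs.1, lt_of_le_of_ne (hs.2.trans ht1T) hTs⟩
    have hmem'' : ∀ {s : ℝ}, t k ≤ s → s ≤ t (k + 1) →
        ∀ᵐ u ∂(volume.restrict (Set.Ioc (t k) s)), x' u ∈ F (x u) := by
      intro s hs1 hs2
      exact ae_restrict_of_ae_restrict_of_subset (Set.Ioc_subset_Ioc le_rfl hs2) hmem'
    -- speed bound
    have hspeed : ∀ s, t k ≤ s → s ≤ t (k + 1) → ‖x s - x (t k)‖ ≤ P * (s - t k) := by
      intro s hs1 hs2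
      rw [hincr s hs1 hs2]
      have hb : ∀ᵐ u ∂(volume.restrict (Set.Ioc (t k) s)), ‖x' u‖ ≤ (fun _ => P) u := by
        filter_upwards [hmem'' hs1 hs2] with u hu
        exact hFbd _ _ hu
      have hgint : Integrable (fun _ : ℝ => P) (volume.restrict (Set.Ioc (t k) s)) := by
        have : IsFiniteMeasure (volume.restrict (Set.Ioc (t k) s)) :=
          ⟨by rw [Measure.restrict_apply_univ]; simp⟩
        exact integrable_const P
      calc ‖∫ u in Set.Ioc (t k) s, x' u‖ ≤ ∫ _ in Set.Ioc (t k) s, P :=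
            norm_integral_le_of_norm_le hgint hb
        _ = P * (s - t k) := by
            rw [setIntegral_const, Real.volume_real_Ioc_of_le (by linarith),
              smul_eq_mul, mul_comm]
    -- the convex compact target
    set R : ℝ := epsB L P h ρ t k + P * h (k + 1) with hR
    have hεnn : 0 ≤ epsB L P h ρ t k :=
      epsB_nonneg hL hP (hρ 0 (Nat.zero_le n)) (fun j h1 h2 => hh j h1 (h2.trans hk))
        (fun j hj => hρ j (hj.trans hk))
    have hRnn : 0 ≤ R := by positivity
    set K : Set (Fin d → ℝ) := F z + Metric.closedBall 0 (L * R) with hK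
    have hKconv : Convex ℝ K := (hFconv z).add (convex_closedBall 0 (L * R))
    have hKcl : IsClosed K := ((hFc z).add (isCompact_closedBall 0 (L * R))).isClosed
    have hKmem : ∀ᵐ s ∂(volume.restrict (Set.Ioc (t k) (t (k + 1)))), x' s ∈ K := by
      filter_upwards [hmem', ae_restrict_mem measurableSet_Ioc] with s hsF hsIoc
      obtain ⟨w, hw, hdw⟩ := exists_close_F hFne hFc hFlip hsF z
      have hxz : ‖x s - z‖ ≤ R := by
        have h1 : ‖x s - x (t k)‖ ≤ P * (s - t k) := hspeed s hsIoc.1.le hsIoc.2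
        have h2 : ‖x (t k) - z‖ = dist (x (t k)) z := (dist_eq_norm _ _).symm
        have h3 : s - t k ≤ h (k + 1) := by rw [hts] at hsIoc; linarith [hsIoc.2]
        have h4 : ‖x s - z‖ ≤ ‖x s - x (t k)‖ + ‖x (t k) - z‖ := by
          have heq : x s - z = (x s - x (t k)) + (x (t k) - z) := by abel
          rw [heq]; exact norm_add_le _ _
        have h5 : P * (s - t k) ≤ P * h (k + 1) := by nlinarith
        rw [h2] at h4
        simp only [hR]
        linarith
      refine Set.mem_add.2 ⟨w, hw, x' s - w, ?_, by abel⟩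
      rw [Metric.mem_closedBall, dist_eq_norm, sub_zero, ← dist_eq_norm]
      calc dist (x' s) w ≤ L * ‖x s - z‖ := hdw
        _ ≤ L * R := mul_le_mul_of_nonneg_left hxz hL.le
    -- average over the step interval
    set c : ENNReal := ENNReal.ofReal (h (k + 1)) with hc
    have hc0 : c ≠ 0 := by
      simp only [hc, ne_eq, ENNReal.ofReal_eq_zero, not_le]
      exact hh'
    have hcT : c ≠ ⊤ := ENNReal.ofReal_ne_top
    set μ : Measure ℝ := c⁻¹ • (volume.restrict (Set.Ioc (t k) (t (k + 1)))) with hμ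
    haveI hprob : IsProbabilityMeasure μ := by
      constructor
      rw [hμ, Measure.smul_apply, Measure.restrict_apply_univ, Real.volume_Ioc,
        smul_eq_mul]
      have : t (k + 1) - t k = h (k + 1) := by rw [hts]; ring
      rw [this, ← hc]
      exact ENNReal.inv_mul_cancel hc0 hcT
    have hxint2 : Integrable x' μ := by
      refine Integrable.smul_measure ?_ (ENNReal.inv_ne_top.2 hc0)
      exact hxint.mono_set (hIocsub le_rfl)
    have hmean : ∫ s, x' s ∂μ ∈ K := by
      refine hKconv.integral_mem hKcl ?_ hxint2
      rw [hμ]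
      exact Measure.ae_smul_measure hKmem _
    have hint_eq : ∫ s, x' s ∂μ = (h (k + 1))⁻¹ • (x (t (k + 1)) - x (t k)) := by
      rw [hμ, integral_smul_measure, hincr (t (k + 1)) htlt.le le_rfl]
      congr 1
      rw [ENNReal.toReal_inv, hc, ENNReal.toReal_ofReal hh'.le]
    rw [hint_eq] at hmean
    obtain ⟨w, hw, e, he, heq⟩ := Set.mem_add.1 hmean
    have hxdecomp : x (t (k + 1)) = x (t k) + h (k + 1) • w + h (k + 1) • e := by
      have h1 : h (k + 1) • ((h (k + 1))⁻¹ • (x (t (k + 1)) - x (t k)))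
          = x (t (k + 1)) - x (t k) := smul_inv_smul₀ hh'.ne' _
      rw [← heq] at h1
      have h2 : x (t (k + 1)) - x (t k) = h (k + 1) • w + h (k + 1) • e := by
        rw [← h1, smul_add]
      rw [sub_eq_iff_eq_add] at h2
      rw [h2]; abel
    have hnorme : ‖e‖ ≤ L * R := by
      rw [Metric.mem_closedBall, dist_eq_norm, sub_zero] at he
      exact he
    set p : Fin d → ℝ := z + h (k + 1) • w with hp
    have hpmem : p ∈ (fun f => z + h (k + 1) • f) '' F z := ⟨w, hw, rfl⟩
    have hclose : ‖x (t (k + 1)) - p‖ ≤ epsB L P h ρ t k + h (k + 1) * (L * R) := by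
      have heq2 : x (t (k + 1)) - p = (x (t k) - z) + h (k + 1) • e := by
        rw [hxdecomp, hp]; abel
      rw [heq2]
      refine le_trans (norm_add_le _ _) ?_
      have h1 : ‖x (t k) - z‖ = dist (x (t k)) z := (dist_eq_norm _ _).symm
      have h2 : ‖h (k + 1) • e‖ = h (k + 1) * ‖e‖ := by
        rw [norm_smul, Real.norm_eq_abs, abs_of_pos hh']
      have h3 : h (k + 1) * ‖e‖ ≤ h (k + 1) * (L * R) :=
        mul_le_mul_of_nonneg_left hnorme hh'.le
      rw [h1, h2]
      linarith
    obtain ⟨g, hgmem, hgp⟩ := exists_proj_close hpmem (hρ (k + 1) hk1)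
    refine ⟨g, ?_, ?_⟩
    · rw [discReach_succ]
      exact Set.mem_iUnion₂.2 ⟨z, hz, hgmem⟩
    · have htri : dist (x (t (k + 1))) g ≤ ‖x (t (k + 1)) - p‖ + ‖g - p‖ := by
        rw [dist_eq_norm]
        have heq3 : x (t (k + 1)) - g = (x (t (k + 1)) - p) + -(g - p) := by abel
        rw [heq3]
        refine le_trans (norm_add_le _ _) ?_
        rw [norm_neg]
      have hC : dist (x (t (k + 1))) g
          ≤ epsB L P h ρ t k * (1 + L * h (k + 1)) + L * P * h (k + 1) ^ 2
            + ρ (k + 1) / 2 := by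
        have := le_trans htri (add_le_add hclose hgp)
        refine le_trans this (le_of_eq ?_)
        rw [hR]
        ring
      rw [epsB_succ hts]
      exact step_ineq hL hP hh' (hρ (k + 1) hk1) hεnn hC

/-! ### Direction (b): discrete points are close to the reachable set -/

set_option maxHeartbeats 1000000 in
lemma dirB (d : ℕ) (T L P : ℝ) (hT : 0 < T) (hL : 0 < L) (hP : 0 < P)
    (X0 : Set (Fin d → ℝ))
    (F : (Fin d → ℝ) → Set (Fin d → ℝ))
    (hFne : ∀ x, (F x).Nonempty) (hFc : ∀ x, IsCompact (F x))
    (hFlip : ∀ x y, Metric.hausdorffDist (F x) (F y) ≤ L * ‖x - y‖)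
    (hFbd : ∀ x, ∀ f ∈ F x, ‖f‖ ≤ P)
    (n : ℕ) (h ρ t : ℕ → ℝ)
    (hh : ∀ j, 1 ≤ j → j ≤ n → 0 < h j)
    (hsum : ∑ j ∈ Finset.Icc 1 n, h j = T)
    (hρ : ∀ j, j ≤ n → 0 < ρ j)
    (ht : ∀ k, k ≤ n → t k = ∑ j ∈ Finset.Icc 1 k, h j) :
    ∀ k, k ≤ n → ∀ z ∈ discReach d F X0 h ρ k, ∀ err : ℝ, 0 < err →
      ∃ w ∈ reach d F X0 T (t k), dist z w ≤ epsB L P h ρ t k + err := by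
  have ht0 : t 0 = 0 := by rw [ht 0 (Nat.zero_le n)]; simp
  have tnonneg : ∀ k, k ≤ n → 0 ≤ t k := by
    intro k hk
    rw [ht k hk]
    refine Finset.sum_nonneg fun j hj => ?_
    rw [Finset.mem_Icc] at hj
    exact (hh j hj.1 (hj.2.trans hk)).le
  have tleT : ∀ k, k ≤ n → t k ≤ T := by
    intro k hk
    rw [ht k hk, ← hsum]
    refine Finset.sum_le_sum_of_subset_of_nonneg (Finset.Icc_subset_Icc_right hk) ?_
    intro j hj _
    rw [Finset.mem_Icc] at hj
    exact (hh j hj.1 hj.2).le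
  have tsucc : ∀ k, k + 1 ≤ n → t (k + 1) = t k + h (k + 1) := by
    intro k hk1
    rw [ht (k + 1) hk1, ht k (Nat.le_of_succ_le hk1),
      Finset.sum_Icc_succ_top (Nat.succ_le_succ (Nat.zero_le k))]
  intro k
  induction k with
  | zero =>
    intro hk z hz err herr
    rw [discReach_zero] at hz
    obtain ⟨a, ha, hza⟩ := exists_of_mem_proj hz
    obtain ⟨x, x', hsol, hxs0, _⟩ :=
      trackingSol hL hP hFne hFc hFlip hFbd hT.le a (hFne a).some_mem herr
    have hIsSol : IsSolution d F X0 T x := hsol.isSolution (by rw [hxs0]; exact ha)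
    refine ⟨x (t 0), ⟨x, hIsSol, rfl⟩, ?_⟩
    rw [ht0, hxs0, epsB_zero ht0, dist_eq_norm]
    linarith [hza]
  | succ k IH =>
    intro hk1 z' hz' err herr
    have hk : k ≤ n := Nat.le_of_succ_le hk1
    have hh' : 0 < h (k + 1) := hh (k + 1) (Nat.succ_le_succ (Nat.zero_le k)) hk1
    have htk0 : 0 ≤ t k := tnonneg k hk
    have ht1T : t (k + 1) ≤ T := tleT (k + 1) hk1
    have hts : t (k + 1) = t k + h (k + 1) := tsucc k hk1
    have htlt : t k < t (k + 1) := by rw [hts]; linarith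
    have htkT : t k ≤ T := tleT k hk
    rw [discReach_succ] at hz'
    obtain ⟨z, hz, hproj⟩ := Set.mem_iUnion₂.1 hz'
    obtain ⟨w0, hw0, hzw0⟩ := exists_of_mem_proj hproj
    obtain ⟨v, hv, rfl⟩ := hw0
    set E : ℝ := Real.exp (L * h (k + 1)) with hEdef
    have hE : 0 < E := Real.exp_pos _
    have herr1 : 0 < err / (2 * E) := by positivity
    have herr2 : 0 < err / 2 := by positivity
    obtain ⟨w, hwreach, hdzw⟩ := IH hk z hz (err / (2 * E)) herr1
    obtain ⟨x, hxsol, hxval⟩ := hwreach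
    obtain ⟨hx0, x', hxint, hxeq, hxmem⟩ := hxsol
    -- restriction of x to [0, t k]
    have hkT : t k < T := lt_of_lt_of_le htlt ht1T
    have sol1 : SolOn F x x' 0 (t k) := by
      refine ⟨hxint.mono_set (Set.Icc_subset_Icc le_rfl htkT), ?_, ?_⟩
      · intro s hs
        exact hxeq s ⟨hs.1, hs.2.trans htkT⟩
      · refine ae_restrict_of_ae_restrict_of_subset ?_ hxmem
        intro s hs
        exact ⟨hs.1, lt_of_le_of_lt hs.2 hkT⟩
    -- tracking solution on [t k, t (k+1)]
    obtain ⟨x₂, x₂', sol2, hx2s0, _, hest2⟩ :=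
      trackingSol_lt hL hP hFne hFc hFlip hFbd htlt (x (t k)) hv herr2
    -- continuation on [t (k+1), T]
    obtain ⟨x₃, x₃', sol3, hx3s0, _⟩ :=
      trackingSol hL hP hFne hFc hFlip hFbd ht1T (x₂ (t (k + 1)))
        (hFne (x₂ (t (k + 1)))).some_mem one_pos
    -- glue the three pieces
    have glue1 := SolOn.glue htk0 htlt.le sol1 sol2 hx2s0
    have hy1val : (fun u => if u ≤ t k then x u else x₂ u) (t (k + 1)) = x₂ (t (k + 1)) := by
      simp only [if_neg (not_le.2 htlt)]
    have hmatch : x₃ (t (k + 1)) = (fun u => if u ≤ t k then x u else x₂ u) (t (k + 1)) := by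
      rw [hy1val]; exact hx3s0
    have glue2 := SolOn.glue (le_trans htk0 htlt.le) ht1T glue1 sol3 hmatch
    set y : ℝ → Fin d → ℝ := fun u => if u ≤ t (k + 1)
      then (fun u => if u ≤ t k then x u else x₂ u) u else x₃ u with hydef
    have hy0 : y 0 = x 0 := by
      simp only [hydef]
      rw [if_pos (le_trans htk0 htlt.le), if_pos htk0]
    have hyIsSol : IsSolution d F X0 T y := glue2.isSolution (by rw [hy0]; exact hx0)
    have hyval : y (t (k + 1)) = x₂ (t (k + 1)) := by
      simp only [hydef]
      rw [if_pos le_rfl, if_neg (not_le.2 htlt)]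
    refine ⟨y (t (k + 1)), ⟨y, hyIsSol, rfl⟩, ?_⟩
    rw [hyval]
    -- distance estimate
    have hδ : dist z (x (t k)) ≤ epsB L P h ρ t k + err / (2 * E) := by
      rw [hxval]; exact hdzw
    have hts' : t (k + 1) - t k = h (k + 1) := by rw [hts]; ring
    rw [hts'] at hest2
    have htri : dist z' (x₂ (t (k + 1)))
        ≤ ‖z' - (z + h (k + 1) • v)‖ + ‖z - x (t k)‖
          + ‖x₂ (t (k + 1)) - (x (t k) + h (k + 1) • v)‖ := by
      rw [dist_eq_norm]
      have heq : z' - x₂ (t (k + 1))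
          = (z' - (z + h (k + 1) • v)) + (z - x (t k))
            + -(x₂ (t (k + 1)) - (x (t k) + h (k + 1) • v)) := by abel
      rw [heq]
      refine le_trans (norm_add_le _ _) ?_
      rw [norm_neg]
      have := norm_add_le (z' - (z + h (k + 1) • v)) (z - x (t k))
      linarith
    have hzx : ‖z - x (t k)‖ = dist z (x (t k)) := (dist_eq_norm _ _).symm
    have hxz : ‖x (t k) - z‖ = dist z (x (t k)) := by
      rw [norm_sub_rev]; exact (dist_eq_norm _ _).symm
    -- put the pieces together
    set ε : ℝ := epsB L P h ρ t k with hεdef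
    have hεnn : 0 ≤ ε :=
      epsB_nonneg hL hP (hρ 0 (Nat.zero_le n)) (fun j h1 h2 => hh j h1 (h2.trans hk))
        (fun j hj => hρ j (hj.trans hk))
    have hδ' : dist z (x (t k)) ≤ ε + err / (2 * E) := hδ
    have hkey : ρ (k + 1) / 2
        ≤ (E - 1) * (ρ (k + 1) / 2 + ρ (k + 1) / (2 * L * h (k + 1))) := by
      have hLu : 0 < L * h (k + 1) := by positivity
      have e3 : ρ (k + 1) / 2 ≤ (E - 1) * (ρ (k + 1) / (2 * (L * h (k + 1)))) :=
        half_le_exp_term hLu (hρ (k + 1) hk1)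
      have e3' : (E - 1) * (ρ (k + 1) / (2 * (L * h (k + 1))))
          = (E - 1) * (ρ (k + 1) / (2 * L * h (k + 1))) := by rw [mul_assoc]
      have hem1 : 0 ≤ E - 1 := by
        have h1 := Real.add_one_le_exp (L * h (k + 1))
        have h2 : 0 ≤ L * h (k + 1) := by positivity
        simp only [hEdef]
        linarith
      have e4 : 0 ≤ (E - 1) * (ρ (k + 1) / 2) := by
        have : 0 ≤ ρ (k + 1) / 2 := by linarith [hρ (k + 1) hk1]
        positivity
      nlinarith [e3' ▸ e3]
    have hEerr : err / (2 * E) * E = err / 2 := by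
      have heq : err / (2 * E) * E = err * (E / E) / 2 := by ring
      rw [heq, div_self hE.ne', mul_one]
    have hem1 : 0 ≤ E - 1 := by
      have h1 := Real.add_one_le_exp (L * h (k + 1))
      have h2 : 0 ≤ L * h (k + 1) := by positivity
      simp only [hEdef]
      linarith
    have hest2' : ‖x₂ (t (k + 1)) - (x (t k) + h (k + 1) • v)‖
        ≤ (dist z (x (t k)) + P * h (k + 1)) * (E - 1) + err / 2 := by
      rw [← hxz]
      exact hest2
    have hgrow : (dist z (x (t k)) + P * h (k + 1)) * (E - 1)
        ≤ ((ε + err / (2 * E)) + P * h (k + 1)) * (E - 1) := by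
      refine mul_le_mul_of_nonneg_right ?_ hem1
      linarith
    have hrec : epsB L P h ρ t (k + 1)
        = E * ε + (E - 1) * (P * h (k + 1) + ρ (k + 1) / 2
            + ρ (k + 1) / (2 * L * h (k + 1))) := epsB_succ hts
    calc dist z' (x₂ (t (k + 1)))
        ≤ ‖z' - (z + h (k + 1) • v)‖ + ‖z - x (t k)‖
          + ‖x₂ (t (k + 1)) - (x (t k) + h (k + 1) • v)‖ := htri
      _ ≤ ρ (k + 1) / 2 + dist z (x (t k))
          + ((dist z (x (t k)) + P * h (k + 1)) * (E - 1) + err / 2) := by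
          rw [hzx]
          linarith [hzw0, hest2']
      _ ≤ epsB L P h ρ t (k + 1) + err := by
          rw [hrec]
          have expand : ((ε + err / (2 * E)) + P * h (k + 1)) * (E - 1)
              = (ε + err / (2 * E)) * E - (ε + err / (2 * E))
                + P * h (k + 1) * (E - 1) := by ring
          have expand2 : (ε + err / (2 * E)) * E = ε * E + err / 2 := by
            rw [add_mul, hEerr]
          have hrhs : (E - 1) * (P * h (k + 1) + ρ (k + 1) / 2
              + ρ (k + 1) / (2 * L * h (k + 1)))
              = (E - 1) * (P * h (k + 1))
                + (E - 1) * (ρ (k + 1) / 2 + ρ (k + 1) / (2 * L * h (k + 1))) := by ring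
          nlinarith [hgrow, hδ', hkey, hem1, hεnn]


theorem stmt_2 (d : ℕ) (T L P : ℝ) (hT : 0 < T) (hL : 0 < L) (hP : 0 < P)
    (X0 : Set (Fin d → ℝ)) (hX0ne : X0.Nonempty) (hX0c : IsCompact X0)
    (F : (Fin d → ℝ) → Set (Fin d → ℝ))
    (hFne : ∀ x, (F x).Nonempty) (hFc : ∀ x, IsCompact (F x))
    (hFconv : ∀ x, Convex ℝ (F x))
    (hFlip : ∀ x y, Metric.hausdorffDist (F x) (F y) ≤ L * ‖x - y‖)
    (hFbd : ∀ x, ∀ f ∈ F x, ‖f‖ ≤ P)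
    (n : ℕ) (h ρ t : ℕ → ℝ)
    (hh : ∀ j, 1 ≤ j → j ≤ n → 0 < h j)
    (hsum : ∑ j ∈ Finset.Icc 1 n, h j = T)
    (hρ : ∀ j, j ≤ n → 0 < ρ j)
    (ht : ∀ k, k ≤ n → t k = ∑ j ∈ Finset.Icc 1 k, h j)
    (k : ℕ) (hk : k ≤ n) :
    Metric.hausdorffDist (reach d F X0 T (t k)) (discReach d F X0 h ρ k) ≤
      Real.exp (L * T) * ρ 0 / 2 +
        ∑ j ∈ Finset.Icc 1 k, Real.exp (L * (T - t j)) * (Real.exp (L * h j) - 1) *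
          (P * h j + ρ j / 2 + ρ j / (2 * L * h j)) := by

  have tleT : ∀ k, k ≤ n → t k ≤ T := by
    intro k hk
    rw [ht k hk, ← hsum]
    refine Finset.sum_le_sum_of_subset_of_nonneg (Finset.Icc_subset_Icc_right hk) ?_
    intro j hj _
    rw [Finset.mem_Icc] at hj
    exact (hh j hj.1 hj.2).le
  have hterm_nonneg : ∀ j, 1 ≤ j → j ≤ k →
      0 ≤ Real.exp (L * h j) - 1 ∧ 0 ≤ P * h j + ρ j / 2 + ρ j / (2 * L * h j) := by
    intro j h1 h2
    have hhj := hh j h1 (h2.trans hk)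
    have hρj := hρ j (h2.trans hk)
    constructor
    · have := Real.add_one_le_exp (L * h j)
      have h0 : (0:ℝ) ≤ L * h j := by positivity
      linarith
    · positivity
  have hepsle : epsB L P h ρ t k ≤
      Real.exp (L * T) * ρ 0 / 2 +
        ∑ j ∈ Finset.Icc 1 k, Real.exp (L * (T - t j)) * (Real.exp (L * h j) - 1) *
          (P * h j + ρ j / 2 + ρ j / (2 * L * h j)) := by
    unfold epsB
    refine add_le_add ?_ (Finset.sum_le_sum ?_)
    · have h1 : Real.exp (L * t k) ≤ Real.exp (L * T) :=
        Real.exp_le_exp.2 (mul_le_mul_of_nonneg_left (tleT k hk) hL.le)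
      have hρ0 := hρ 0 (Nat.zero_le n)
      have := mul_le_mul_of_nonneg_right h1 hρ0.le
      linarith
    · intro j hj
      rw [Finset.mem_Icc] at hj
      obtain ⟨hem1, hst⟩ := hterm_nonneg j hj.1 hj.2
      have h1 : Real.exp (L * (t k - t j)) ≤ Real.exp (L * (T - t j)) := by
        refine Real.exp_le_exp.2 (mul_le_mul_of_nonneg_left ?_ hL.le)
        linarith [tleT k hk]
      exact mul_le_mul_of_nonneg_right (mul_le_mul_of_nonneg_right h1 hem1) hst
  have hRHS0 : 0 ≤ Real.exp (L * T) * ρ 0 / 2 +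
      ∑ j ∈ Finset.Icc 1 k, Real.exp (L * (T - t j)) * (Real.exp (L * h j) - 1) *
        (P * h j + ρ j / 2 + ρ j / (2 * L * h j)) := by
    have h1 : (0:ℝ) ≤ Real.exp (L * T) * ρ 0 / 2 := by
      have := hρ 0 (Nat.zero_le n)
      positivity
    have h2 : (0:ℝ) ≤ ∑ j ∈ Finset.Icc 1 k,
        Real.exp (L * (T - t j)) * (Real.exp (L * h j) - 1) *
          (P * h j + ρ j / 2 + ρ j / (2 * L * h j)) := by
      refine Finset.sum_nonneg fun j hj => ?_
      rw [Finset.mem_Icc] at hj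
      obtain ⟨hem1, hst⟩ := hterm_nonneg j hj.1 hj.2
      positivity
    linarith
  refine Metric.hausdorffDist_le_of_infDist hRHS0 ?_ ?_
  · rintro y ⟨x, hxsol, rfl⟩
    obtain ⟨z, hzmem, hdist⟩ :=
      dirA d T L P hT hL hP X0 F hFne hFc hFconv hFlip hFbd n h ρ t hh hsum hρ ht k hk x hxsol
    exact le_trans (Metric.infDist_le_dist_of_mem hzmem) (le_trans hdist hepsle)
  · intro z hz
    refine le_of_forall_pos_le_add fun ε hε => ?_
    obtain ⟨w, hw, hd⟩ :=
      dirB d T L P hT hL hP X0 F hFne hFc hFlip hFbd n h ρ t hh hsum hρ ht k hk z hz ε hε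
    refine le_trans (Metric.infDist_le_dist_of_mem hw) (le_trans hd ?_)
    linarith [hepsle]
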